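/- arXiv:math/0212059 — 9 statements merged into one kernel-verified Lean document; each statement's English description precedes it below -/
import Mathlib

section
/- With the matrix setup below, for all indices i, j one has Σ_{r=1}^n Σ_{s=1}^n (g^{rs} − g^{sr}) P^i_r P^j_s = g^{ij} − g^{ji} − (Ľ^i L^j − L^i Ľ^j)/Ω. Consequently, the normality equations for g hold if and only if the matrix u with entries u^{ij} = g^{ij} − Ľ^i L^j/Ω is symmetric. -/
/-- With `g` invertible, `L ≠ 0`, right-dual `L^i`, left-dual `Ľ^i`,
`Ω = Σ L_s L^s ≠ 0` and projector `P^i_j = δ^i_j - L^i L_j/Ω`, one has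
`Σ_{r,s} (g^{rs} - g^{sr}) P^i_r P^j_s = g^{ij} - g^{ji} - (Ľ^i L^j - L^i Ľ^j)/Ω`,
and the normality equations hold iff `u^{ij} = g^{ij} - Ľ^i L^j/Ω` is symmetric. -/
theorem stmt1 {n : ℕ} (hn : 2 ≤ n)
    (g : Matrix (Fin n) (Fin n) ℝ) (hg : IsUnit g.det)
    (L : Fin n → ℝ) (hL : L ≠ 0)
    (Lup Lcheck : Fin n → ℝ)
    (hLup : ∀ i, Lup i = ∑ s, L s * g⁻¹ s i)
    (hLcheck : ∀ i, Lcheck i = ∑ s, g⁻¹ i s * L s)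
    (Ω : ℝ) (hΩ : Ω = ∑ s, L s * Lup s) (hΩ0 : Ω ≠ 0)
    (P : Matrix (Fin n) (Fin n) ℝ)
    (hP : ∀ i j, P i j = (if i = j then (1:ℝ) else 0) - Lup i * L j / Ω) :
    (∀ i j, ∑ r, ∑ s, (g⁻¹ r s - g⁻¹ s r) * P i r * P j s
        = g⁻¹ i j - g⁻¹ j i - (Lcheck i * Lup j - Lup i * Lcheck j) / Ω) ∧
    ((∀ i j, ∑ r, ∑ s, (g⁻¹ r s - g⁻¹ s r) * P i r * P j s = 0) ↔
      (∀ i j, g⁻¹ i j - Lcheck i * Lup j / Ω = g⁻¹ j i - Lcheck j * Lup i / Ω)) := by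
  have f3 : ∑ s, L s * Lcheck s = Ω := by
    calc ∑ s, L s * Lcheck s = ∑ s, ∑ t, L s * (g⁻¹ s t * L t) := by
          simp [hLcheck, Finset.mul_sum]
      _ = ∑ t, ∑ s, L s * (g⁻¹ s t * L t) := Finset.sum_comm
      _ = ∑ t, (∑ s, L s * g⁻¹ s t) * L t := by
          simp [Finset.sum_mul, mul_assoc]
      _ = ∑ t, L t * Lup t := by
          refine Finset.sum_congr rfl (fun t _ => ?_)
          rw [← hLup]; ring
      _ = Ω := hΩ.symm
  have f4 : ∑ s, L s * Lup s = Ω := hΩ.symm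
  have hdelta : ∀ (f : Fin n → ℝ) (j : Fin n),
      ∑ s, f s * (if j = s then (1:ℝ) else 0) = f j := by
    intro f j; simp
  have hLup' : ∀ j, ∑ s, g⁻¹ s j * L s = Lup j := by
    intro j; rw [hLup]; exact Finset.sum_congr rfl (fun s _ => mul_comm _ _)
  have hLcheck' : ∀ i, ∑ s, g⁻¹ i s * L s = Lcheck i := fun i => (hLcheck i).symm
  have hin : ∀ (r j : Fin n), ∑ s, (g⁻¹ r s - g⁻¹ s r) * P j s
      = (g⁻¹ r j - g⁻¹ j r) - Lup j / Ω * (Lcheck r - Lup r) := by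
    intro r j
    have e : ∀ s, (g⁻¹ r s - g⁻¹ s r) * P j s
        = (g⁻¹ r s - g⁻¹ s r) * (if j = s then (1:ℝ) else 0)
          - (Lup j / Ω) * (g⁻¹ r s * L s) + (Lup j / Ω) * (g⁻¹ s r * L s) := by
      intro s; rw [hP]; ring
    rw [Finset.sum_congr rfl (fun s _ => e s), Finset.sum_add_distrib,
      Finset.sum_sub_distrib, hdelta, ← Finset.mul_sum, ← Finset.mul_sum,
      hLcheck' r, hLup' r]
    ring
  have key : ∀ i j, ∑ r, ∑ s, (g⁻¹ r s - g⁻¹ s r) * P i r * P j s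
      = g⁻¹ i j - g⁻¹ j i - (Lcheck i * Lup j - Lup i * Lcheck j) / Ω := by
    intro i j
    have step : ∀ r, ∑ s, (g⁻¹ r s - g⁻¹ s r) * P i r * P j s
        = ((g⁻¹ r j - g⁻¹ j r) - Lup j / Ω * (Lcheck r - Lup r)) * P i r := by
      intro r
      rw [← hin r j, Finset.sum_mul]
      exact Finset.sum_congr rfl (fun s _ => by ring)
    rw [Finset.sum_congr rfl (fun r _ => step r)]
    have expand : ∀ r, ((g⁻¹ r j - g⁻¹ j r) - Lup j / Ω * (Lcheck r - Lup r)) * P i r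
        = g⁻¹ r j * (if i = r then (1:ℝ) else 0)
          - g⁻¹ j r * (if i = r then (1:ℝ) else 0)
          - (Lup j / Ω) * (Lcheck r * (if i = r then (1:ℝ) else 0))
          + (Lup j / Ω) * (Lup r * (if i = r then (1:ℝ) else 0))
          - (Lup i / Ω) * (L r * g⁻¹ r j)
          + (Lup i / Ω) * (g⁻¹ j r * L r)
          + (Lup i * Lup j / (Ω * Ω)) * (L r * Lcheck r)
          - (Lup i * Lup j / (Ω * Ω)) * (L r * Lup r) := by
      intro r; rw [hP]; ring
    rw [Finset.sum_congr rfl (fun r _ => expand r)]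
    simp only [Finset.sum_add_distrib, Finset.sum_sub_distrib, ← Finset.mul_sum]
    rw [hdelta (fun r => g⁻¹ r j) i, hdelta (fun r => g⁻¹ j r) i,
      hdelta Lcheck i, hdelta Lup i, hLcheck' j, f3, f4,
      show (∑ r, L r * g⁻¹ r j) = Lup j from (hLup j).symm]
    field_simp
    ring
  refine ⟨key, ?_⟩
  constructor
  · intro h i j
    have h0 := (key i j).symm.trans (h i j)
    field_simp at h0 ⊢
    linarith
  · intro h i j
    rw [key i j]
    have := h i j
    field_simp at this ⊢
    linarith
end

section
/- With the matrix setup below, the following are equivalent: (1) the normality equations for g hold; (2) there exist a vector A ∈ ℝⁿ with components A^1,…,A^n and a symmetric n×n real matrix u with det u = 0 such that g^{ij} = u^{ij} + A^i L^j for all indices i, j. -/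
/-- Lemma 4.3: the normality equations for `g` hold iff there exist a
vector `A` and a symmetric degenerate matrix `u` with `g^{ij} = u^{ij} + A^i L^j`. -/
theorem stmt5 {n : ℕ} (hn : 2 ≤ n)
    (g : Matrix (Fin n) (Fin n) ℝ) (hg : IsUnit g.det)
    (L : Fin n → ℝ) (hL : L ≠ 0)
    (Lup Lcheck : Fin n → ℝ)
    (hLup : ∀ i, Lup i = ∑ s, L s * g⁻¹ s i)
    (hLcheck : ∀ i, Lcheck i = ∑ s, g⁻¹ i s * L s)
    (Ω : ℝ) (hΩ : Ω = ∑ s, L s * Lup s) (hΩ0 : Ω ≠ 0)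
    (P : Matrix (Fin n) (Fin n) ℝ)
    (hP : ∀ i j, P i j = (if i = j then (1:ℝ) else 0) - Lup i * L j / Ω) :
    (∀ i j, ∑ r, ∑ s, (g⁻¹ r s - g⁻¹ s r) * P i r * P j s = 0) ↔
      (∃ (A : Fin n → ℝ) (u : Matrix (Fin n) (Fin n) ℝ),
        u.IsSymm ∧ u.det = 0 ∧ ∀ i j, g⁻¹ i j = u i j + A i * Lup j) := by
  -- basic scalar identities
  have hΩup : ∑ s, L s * Lup s = Ω := hΩ.symm
  have hΩch : ∑ s, L s * Lcheck s = Ω := by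
    rw [hΩ]
    simp only [hLcheck, hLup, Finset.mul_sum]
    rw [Finset.sum_comm]
    exact Finset.sum_congr rfl fun s _ => Finset.sum_congr rfl fun t _ => by ring
  have hBL : ∀ r, ∑ s, (g⁻¹ r s - g⁻¹ s r) * L s = Lcheck r - Lup r := by
    intro r
    simp only [sub_mul, Finset.sum_sub_distrib]
    rw [hLcheck r, hLup r]
    congr 1
    exact Finset.sum_congr rfl fun s _ => mul_comm _ _
  have hLB : ∀ j, ∑ r, L r * (g⁻¹ r j - g⁻¹ j r) = Lup j - Lcheck j := by
    intro j
    simp only [mul_sub, Finset.sum_sub_distrib]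
    rw [hLup j, hLcheck j]
    congr 1
    exact Finset.sum_congr rfl fun s _ => mul_comm _ _
  -- second-index contraction of P with Lup vanishes
  have hPe : ∀ k, ∑ s, Lup s * P k s = 0 := by
    intro k
    simp only [hP, mul_sub, Finset.sum_sub_distrib]
    have h1 : ∑ s, Lup s * (if k = s then (1:ℝ) else 0) = Lup k := by simp
    have h2 : ∑ s, Lup s * (Lup k * L s / Ω) = Lup k := by
      have he : ∀ s, Lup s * (Lup k * L s / Ω) = (L s * Lup s) * (Lup k / Ω) :=
        fun s => by ring
      simp only [he]
      rw [← Finset.sum_mul, hΩup]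
      field_simp
    rw [h1, h2, sub_self]
  -- the key identity: value of the normality expression
  have key : ∀ i j, (∑ r, ∑ s, (g⁻¹ r s - g⁻¹ s r) * P i r * P j s)
      = (g⁻¹ i j - g⁻¹ j i) - (Lcheck i * Lup j - Lcheck j * Lup i) / Ω := by
    intro i j
    have inner : ∀ r, ∑ s, (g⁻¹ r s - g⁻¹ s r) * P i r * P j s
        = P i r * ((g⁻¹ r j - g⁻¹ j r) - (Lcheck r - Lup r) * Lup j / Ω) := by
      intro r
      have he : ∀ s, (g⁻¹ r s - g⁻¹ s r) * P i r * P j s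
          = P i r * ((g⁻¹ r s - g⁻¹ s r) * P j s) := fun s => by ring
      simp only [he]
      rw [← Finset.mul_sum]
      congr 1
      simp only [hP, mul_sub, Finset.sum_sub_distrib]
      have h1 : ∑ s, (g⁻¹ r s - g⁻¹ s r) * (if j = s then (1:ℝ) else 0)
          = g⁻¹ r j - g⁻¹ j r := by simp
      have h2 : ∑ s, (g⁻¹ r s - g⁻¹ s r) * (Lup j * L s / Ω)
          = (Lcheck r - Lup r) * Lup j / Ω := by
        have he2 : ∀ s, (g⁻¹ r s - g⁻¹ s r) * (Lup j * L s / Ω)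
            = ((g⁻¹ r s - g⁻¹ s r) * L s) * (Lup j / Ω) := fun s => by ring
        simp only [he2]
        rw [← Finset.sum_mul, hBL r]
        ring
      rw [h1, h2]
    simp only [inner]
    -- expand ∑ r, P i r * f r
    have expand : ∑ r, P i r * ((g⁻¹ r j - g⁻¹ j r) - (Lcheck r - Lup r) * Lup j / Ω)
        = ∑ r, ((if i = r then (1:ℝ) else 0)
              * ((g⁻¹ r j - g⁻¹ j r) - (Lcheck r - Lup r) * Lup j / Ω)
            - (Lup i * L r / Ω)
              * ((g⁻¹ r j - g⁻¹ j r) - (Lcheck r - Lup r) * Lup j / Ω)) :=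
      Finset.sum_congr rfl fun r _ => by rw [hP i r]; ring
    rw [expand, Finset.sum_sub_distrib]
    have h1 : ∑ r, (if i = r then (1:ℝ) else 0)
        * ((g⁻¹ r j - g⁻¹ j r) - (Lcheck r - Lup r) * Lup j / Ω)
        = (g⁻¹ i j - g⁻¹ j i) - (Lcheck i - Lup i) * Lup j / Ω := by simp
    have h2 : ∑ r, (Lup i * L r / Ω)
        * ((g⁻¹ r j - g⁻¹ j r) - (Lcheck r - Lup r) * Lup j / Ω)
        = (Lup i / Ω) * (Lup j - Lcheck j) := by
      have he : ∀ r, (Lup i * L r / Ω)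
          * ((g⁻¹ r j - g⁻¹ j r) - (Lcheck r - Lup r) * Lup j / Ω)
          = (Lup i / Ω) * (L r * (g⁻¹ r j - g⁻¹ j r))
            - (Lup i * Lup j / (Ω * Ω)) * (L r * Lcheck r)
            + (Lup i * Lup j / (Ω * Ω)) * (L r * Lup r) := fun r => by ring
      simp only [he]
      rw [Finset.sum_add_distrib, Finset.sum_sub_distrib,
        ← Finset.mul_sum, ← Finset.mul_sum, ← Finset.mul_sum, hLB j, hΩch, hΩup]
      ring
    rw [h1, h2]
    field_simp
    ring
  constructor
  · -- normality ⇒ decomposition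
    intro hNorm
    refine ⟨fun i => Lcheck i / Ω,
      Matrix.of (fun i j => g⁻¹ i j - Lcheck i * Lup j / Ω), ?_, ?_, ?_⟩
    · -- symmetry
      apply Matrix.IsSymm.ext
      intro i j
      have hk := key i j
      rw [hNorm i j] at hk
      simp only [Matrix.of_apply]
      have hΩ0' : Ω ≠ 0 := hΩ0
      field_simp at hk ⊢
      linarith [hk]
    · -- degeneracy : u.mulVec L = 0
      by_contra hdet
      have hdet' : IsUnit (Matrix.of
          (fun i j => g⁻¹ i j - Lcheck i * Lup j / Ω) : Matrix (Fin n) (Fin n) ℝ).det :=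
        isUnit_iff_ne_zero.mpr hdet
      have := Matrix.invertibleOfIsUnitDet _ hdet'
      have hinj := Matrix.mulVec_injective_of_invertible
        (Matrix.of (fun i j => g⁻¹ i j - Lcheck i * Lup j / Ω) : Matrix (Fin n) (Fin n) ℝ)
      have hmv : (Matrix.of (fun i j => g⁻¹ i j - Lcheck i * Lup j / Ω)
          : Matrix (Fin n) (Fin n) ℝ).mulVec L = 0 := by
        funext i
        simp only [Matrix.mulVec, dotProduct, Matrix.of_apply, sub_mul,
          Finset.sum_sub_distrib, Pi.zero_apply]
        have h1 : ∑ j, g⁻¹ i j * L j = Lcheck i := (hLcheck i).symm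
        have h2 : ∑ j, (Lcheck i * Lup j / Ω) * L j = Lcheck i := by
          have he : ∀ j, (Lcheck i * Lup j / Ω) * L j
              = (L j * Lup j) * (Lcheck i / Ω) := fun j => by ring
          simp only [he]
          rw [← Finset.sum_mul, hΩup]
          field_simp
        rw [h1, h2, sub_self]
      have : L = 0 := by
        apply hinj
        rw [hmv, Matrix.mulVec_zero]
      exact hL this
    · intro i j
      simp only [Matrix.of_apply]
      field_simp
      ring
  · -- decomposition ⇒ normality
    rintro ⟨A, u, husym, hudet, huA⟩ i j
    have hB : ∀ r s, g⁻¹ r s - g⁻¹ s r = A r * Lup s - A s * Lup r := by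
      intro r s
      rw [huA r s, huA s r, husym.apply s r]
      ring
    simp only [hB]
    have step : ∀ r, ∑ s, (A r * Lup s - A s * Lup r) * P i r * P j s
        = -((Lup r * P i r) * ∑ s, A s * P j s) := by
      intro r
      have he : ∀ s, (A r * Lup s - A s * Lup r) * P i r * P j s
          = (A r * P i r) * (Lup s * P j s) - (Lup r * P i r) * (A s * P j s) :=
        fun s => by ring
      simp only [he]
      rw [Finset.sum_sub_distrib, ← Finset.mul_sum, ← Finset.mul_sum, hPe j,
        mul_zero, zero_sub]
    simp only [step]
    rw [Finset.sum_neg_distrib, ← Finset.sum_mul, hPe i, zero_mul, neg_zero]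
end

section
/- With the matrix setup below, suppose A ∈ ℝⁿ is a vector with components A^1,…,A^n and u is a symmetric n×n real matrix with det u = 0 such that g^{ij} = u^{ij} + A^i L^j for all indices i, j. Then necessarily A^i = Ľ^i/Ω for every i. -/
/-- if `g^{ij} = u^{ij} + A^i L^j` with `u` symmetric and `det u = 0`,
then necessarily `A^i = Ľ^i/Ω` for every `i`. -/
theorem stmt6 {n : ℕ} (hn : 2 ≤ n)
    (g : Matrix (Fin n) (Fin n) ℝ) (hg : IsUnit g.det)
    (L : Fin n → ℝ) (hL : L ≠ 0)
    (Lup Lcheck : Fin n → ℝ)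
    (hLup : ∀ i, Lup i = ∑ s, L s * g⁻¹ s i)
    (hLcheck : ∀ i, Lcheck i = ∑ s, g⁻¹ i s * L s)
    (Ω : ℝ) (hΩ : Ω = ∑ s, L s * Lup s) (hΩ0 : Ω ≠ 0)
    (A : Fin n → ℝ) (u : Matrix (Fin n) (Fin n) ℝ)
    (husymm : u.IsSymm) (hudet : u.det = 0)
    (hrepr : ∀ i j, g⁻¹ i j = u i j + A i * Lup j) :
    ∀ i, A i = Lcheck i / Ω := by
  -- (Lup as a row vector) * g = L
  have hLupg : ∀ j, (∑ k, Lup k * g k j) = L j := by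
    intro j
    have h1 : (∑ k, Lup k * g k j) = ∑ s, L s * ((g⁻¹ * g) s j) := by
      simp only [hLup, Matrix.mul_apply, Finset.sum_mul, Finset.mul_sum]
      rw [Finset.sum_comm]
      congr 1; ext k; congr 1; ext s; ring
    rw [h1, Matrix.nonsing_inv_mul g hg]
    simp [Matrix.one_apply]
  -- u * g = 1 + col (-A) * row L
  have hug : u * g = 1 + Matrix.replicateCol (Fin 1) (-A) * Matrix.replicateRow (Fin 1) L := by
    have hu : ∀ a b, u a b = g⁻¹ a b - A a * Lup b := by
      intro a b; rw [hrepr]; ring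
    ext i j
    simp only [Matrix.mul_apply, Matrix.add_apply, hu]
    have h2 : (∑ k, (g⁻¹ i k - A i * Lup k) * g k j)
        = (g⁻¹ * g) i j - A i * (∑ k, Lup k * g k j) := by
      rw [Matrix.mul_apply, Finset.mul_sum, ← Finset.sum_sub_distrib]
      apply Finset.sum_congr rfl; intro k _; ring
    rw [h2, hLupg, Matrix.nonsing_inv_mul g hg]
    simp [Matrix.replicateCol, Matrix.replicateRow, Matrix.mul_apply, Matrix.one_apply]
    ring
  -- from det u = 0, get ∑ L i * A i = 1
  have hdet : (0 : ℝ) = 1 + dotProduct L (-A) := by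
    have := congrArg Matrix.det hug
    rw [Matrix.det_mul, hudet, zero_mul] at this
    rw [← Matrix.det_one_add_replicateCol_mul_replicateRow (ι := Fin 1) (-A) L]
    exact this
  have hAL : (∑ i, L i * A i) = 1 := by
    have h : dotProduct L (-A) = -(∑ i, L i * A i) := by
      simp [dotProduct]
    rw [h] at hdet; linarith
  -- symmetry of u, contracted with L
  intro i
  have hsym : ∀ j, g⁻¹ i j - A i * Lup j = g⁻¹ j i - A j * Lup i := by
    intro j
    have h1 := hrepr i j
    have h2 := hrepr j i
    have h3 : u i j = u j i := by
      have := congrFun (congrFun husymm j) i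
      simpa [Matrix.transpose_apply] using this
    nlinarith [h1, h2, h3]
  have key : (∑ j, (g⁻¹ i j - A i * Lup j) * L j)
      = ∑ j, (g⁻¹ j i - A j * Lup i) * L j := by
    apply Finset.sum_congr rfl; intro j _; rw [hsym j]
  have lhs : (∑ j, (g⁻¹ i j - A i * Lup j) * L j) = Lcheck i - A i * Ω := by
    rw [hLcheck, hΩ, Finset.mul_sum, ← Finset.sum_sub_distrib]
    apply Finset.sum_congr rfl; intro j _; ring
  have rhs : (∑ j, (g⁻¹ j i - A j * Lup i) * L j) = Lup i - Lup i * (∑ j, L j * A j) := by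
    rw [hLup, Finset.mul_sum, ← Finset.sum_sub_distrib]
    apply Finset.sum_congr rfl; intro j _; ring
  rw [lhs, rhs, hAL] at key
  field_simp
  linarith
end

section
/- With the matrix setup below, the following are equivalent: (1) the normality equations for g hold; (2) there exist a covector A ∈ ℝⁿ with components A_1,…,A_n and a symmetric n×n real matrix u with det u = 0 such that g_{sr} = u_{sr} + L_s A_r for all indices s, r. Moreover, when (2) holds, one necessarily has A_r = Ľ_r/Ω, where Ľ_r = Σ_{i=1}^n Ľ^i g_{ir}. -/
open Matrix

namespace S7

variable {n : ℕ}

lemma vmv_mulVec (x y z : Fin n → ℝ) : vecMulVec x y *ᵥ z = (y ⬝ᵥ z) • x := by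
  funext i
  simp only [mulVec, dotProduct, vecMulVec_apply, Pi.smul_apply, smul_eq_mul, Finset.sum_mul]
  exact Finset.sum_congr rfl fun j _ => by ring

lemma vecMul_vmv (z x y : Fin n → ℝ) : z ᵥ* vecMulVec x y = (z ⬝ᵥ x) • y := by
  funext j
  simp only [vecMul, dotProduct, vecMulVec_apply, Pi.smul_apply, smul_eq_mul, Finset.sum_mul]
  exact Finset.sum_congr rfl fun i _ => by ring

lemma mul_vmv (M : Matrix (Fin n) (Fin n) ℝ) (x y : Fin n → ℝ) :
    M * vecMulVec x y = vecMulVec (M *ᵥ x) y := by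
  ext i j
  simp only [mul_apply, vecMulVec_apply, mulVec, dotProduct, Finset.sum_mul]
  exact Finset.sum_congr rfl fun k _ => by ring

lemma vmv_mul (x y : Fin n → ℝ) (N : Matrix (Fin n) (Fin n) ℝ) :
    vecMulVec x y * N = vecMulVec x (y ᵥ* N) := by
  ext i j
  simp only [mul_apply, vecMulVec_apply, vecMul, dotProduct, Finset.mul_sum]
  exact Finset.sum_congr rfl fun k _ => by ring

lemma vmv_transpose (x y : Fin n → ℝ) : (vecMulVec x y)ᵀ = vecMulVec y x := by
  ext i j; simp [vecMulVec_apply, mul_comm]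

lemma vecMul_smulM (x : Fin n → ℝ) (a : ℝ) (M : Matrix (Fin n) (Fin n) ℝ) :
    x ᵥ* (a • M) = a • (x ᵥ* M) := by
  funext j
  simp only [vecMul, dotProduct, Matrix.smul_apply, Pi.smul_apply, smul_eq_mul, Finset.mul_sum]
  exact Finset.sum_congr rfl fun i _ => by ring

lemma vmv_zero_right (x : Fin n → ℝ) : vecMulVec x (0 : Fin n → ℝ) = 0 := by
  ext i j; simp [vecMulVec_apply]

lemma vmv_zero_left (y : Fin n → ℝ) : vecMulVec (0 : Fin n → ℝ) y = 0 := by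
  ext i j; simp [vecMulVec_apply]

end S7

/-- Lemma 4.4: the normality equations for `g` hold iff there exist a
covector `A` and a symmetric degenerate matrix `u` with `g_{sr} = u_{sr} + L_s A_r`;
moreover in that case necessarily `A_r = Ľ_r/Ω` with `Ľ_r = Σ_i Ľ^i g_{ir}`. -/
theorem stmt7 {n : ℕ} (hn : 2 ≤ n)
    (g : Matrix (Fin n) (Fin n) ℝ) (hg : IsUnit g.det)
    (L : Fin n → ℝ) (hL : L ≠ 0)
    (Lup Lcheck : Fin n → ℝ)
    (hLup : ∀ i, Lup i = ∑ s, L s * g⁻¹ s i)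
    (hLcheck : ∀ i, Lcheck i = ∑ s, g⁻¹ i s * L s)
    (Ω : ℝ) (hΩ : Ω = ∑ s, L s * Lup s) (hΩ0 : Ω ≠ 0)
    (P : Matrix (Fin n) (Fin n) ℝ)
    (hP : ∀ i j, P i j = (if i = j then (1:ℝ) else 0) - Lup i * L j / Ω) :
    ((∀ i j, ∑ r, ∑ s, (g⁻¹ r s - g⁻¹ s r) * P i r * P j s = 0) ↔
      (∃ (A : Fin n → ℝ) (u : Matrix (Fin n) (Fin n) ℝ),
        u.IsSymm ∧ u.det = 0 ∧ ∀ s r, g s r = u s r + L s * A r)) ∧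
    (∀ (A : Fin n → ℝ) (u : Matrix (Fin n) (Fin n) ℝ),
      u.IsSymm → u.det = 0 → (∀ s r, g s r = u s r + L s * A r) →
      ∀ r, A r = (∑ i, Lcheck i * g i r) / Ω) := by
  have hgh : g * g⁻¹ = 1 := Matrix.mul_nonsing_inv g hg
  have hhg : g⁻¹ * g = 1 := Matrix.nonsing_inv_mul g hg
  set h := g⁻¹ with hhdef
  have hLup' : Lup = L ᵥ* h := funext fun i => by rw [hLup i]; rfl
  have hLch' : Lcheck = h *ᵥ L := funext fun i => by rw [hLcheck i]; rfl
  have hΩ' : Ω = L ⬝ᵥ Lup := by rw [hΩ]; rfl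
  have hΩc : L ⬝ᵥ Lcheck = Ω := by
    rw [hLch', dotProduct_mulVec, ← hLup', dotProduct_comm, ← hΩ']
  have hgLc : g *ᵥ Lcheck = L := by rw [hLch', mulVec_mulVec, hgh, one_mulVec]
  have hLupg : Lup ᵥ* g = L := by rw [hLup', vecMul_vecMul, hhg, vecMul_one]
  have h1 : hᵀ * gᵀ = 1 := by rw [← Matrix.transpose_mul, hgh, Matrix.transpose_one]
  have hP' : P = 1 - Ω⁻¹ • vecMulVec Lup L := by
    ext i j
    rw [hP i j]
    simp only [Matrix.sub_apply, Matrix.smul_apply, Matrix.one_apply, vecMulVec_apply,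
      smul_eq_mul]
    ring
  have hPLup : P *ᵥ Lup = 0 := by
    rw [hP', sub_mulVec, one_mulVec, smul_mulVec, S7.vmv_mulVec, ← hΩ', smul_smul,
      inv_mul_cancel₀ hΩ0, one_smul, sub_self]
  have hLcne : Lcheck ≠ 0 := by
    intro e
    apply hL
    rw [← hgLc, e, mulVec_zero]
  -- the "moreover" part
  have moreover : ∀ (A : Fin n → ℝ) (u : Matrix (Fin n) (Fin n) ℝ),
      u.IsSymm → u.det = 0 → (∀ s r, g s r = u s r + L s * A r) →
      ∀ r, A r = (∑ i, Lcheck i * g i r) / Ω := by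
    intro A u hsym hdet hdec r
    obtain ⟨z, hz0, hz⟩ := Matrix.exists_mulVec_eq_zero_iff.mpr hdet
    have hgdec : g = u + vecMulVec L A := by
      ext s t; rw [hdec s t]; simp [vecMulVec_apply, Matrix.add_apply]
    have hzu : z ᵥ* u = 0 := by rw [← Matrix.mulVec_transpose, hsym, hz]
    have hzg : z ᵥ* g = (z ⬝ᵥ L) • A := by
      rw [hgdec, vecMul_add, hzu, zero_add, S7.vecMul_vmv]
    have hzL : z ⬝ᵥ L ≠ 0 := by
      intro h0
      apply hz0
      have e1 : z ᵥ* g = 0 := by rw [hzg, h0, zero_smul]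
      have e2 : z = (z ᵥ* g) ᵥ* h := by rw [vecMul_vecMul, hgh, vecMul_one]
      rw [e1, zero_vecMul] at e2
      exact e2
    have hdot : (z ⬝ᵥ L) * (A ⬝ᵥ Lcheck) = z ⬝ᵥ L := by
      have e1 : (z ᵥ* g) ⬝ᵥ Lcheck = z ⬝ᵥ L := by
        rw [← dotProduct_mulVec, hgLc]
      rw [hzg, smul_dotProduct, smul_eq_mul] at e1
      exact e1
    have hA1 : A ⬝ᵥ Lcheck = 1 := mul_left_cancel₀ hzL (by rw [mul_one]; exact hdot)
    have huLc : u *ᵥ Lcheck = 0 := by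
      have e1 : g *ᵥ Lcheck = u *ᵥ Lcheck + (A ⬝ᵥ Lcheck) • L := by
        rw [hgdec, add_mulVec, S7.vmv_mulVec]
      rw [hgLc, hA1, one_smul] at e1
      exact add_right_cancel (e1.symm.trans (zero_add L).symm)
    have hLcu : Lcheck ᵥ* u = 0 := by rw [← Matrix.mulVec_transpose, hsym, huLc]
    have hLcg : Lcheck ᵥ* g = Ω • A := by
      rw [hgdec, vecMul_add, hLcu, zero_add, S7.vecMul_vmv, dotProduct_comm, hΩc]
    have e3 : (∑ i, Lcheck i * g i r) = Ω * A r := by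
      have e4 := congrFun hLcg r
      simpa [vecMul, dotProduct, smul_eq_mul] using e4
    rw [e3, mul_comm, mul_div_assoc, div_self hΩ0, mul_one]
  -- normality equations as matrix identity
  have key : ∀ i j, ∑ r, ∑ s, (h r s - h s r) * P i r * P j s = (P * (h - hᵀ) * Pᵀ) i j := by
    intro i j
    simp only [Matrix.mul_apply, Matrix.sub_apply, Matrix.transpose_apply, Finset.sum_mul]
    conv_rhs => rw [Finset.sum_comm]
    exact Finset.sum_congr rfl fun r _ => Finset.sum_congr rfl fun s _ => by ring
  have hNE : (∀ i j, ∑ r, ∑ s, (h r s - h s r) * P i r * P j s = 0) ↔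
      P * (h - hᵀ) * Pᵀ = 0 := by
    constructor
    · intro H
      ext i j
      simp only [Matrix.zero_apply]
      rw [← key i j]
      exact H i j
    · intro H i j
      rw [key i j, H, Matrix.zero_apply]
  refine ⟨hNE.trans ⟨?_, ?_⟩, moreover⟩
  · -- forward: from P (h - hᵀ) Pᵀ = 0 construct A and u
    intro H
    set b : Fin n → ℝ := g *ᵥ Lup with hbdef
    -- step 1: h - hᵀ = Ω⁻¹ • (vecMulVec (Lcheck - Lup) Lup + vecMulVec Lup (Lup - Lcheck))
    have hSL : (h - hᵀ) *ᵥ L = Lcheck - Lup := by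
      rw [sub_mulVec, Matrix.mulVec_transpose, ← hLch', ← hLup']
    have hLS : L ᵥ* (h - hᵀ) = Lup - Lcheck := by
      rw [vecMul_sub, Matrix.vecMul_transpose, ← hLch', ← hLup']
    have hSPT : (h - hᵀ) * Pᵀ = (h - hᵀ) - Ω⁻¹ • vecMulVec (Lcheck - Lup) Lup := by
      rw [hP', Matrix.transpose_sub, Matrix.transpose_one, Matrix.transpose_smul,
        S7.vmv_transpose, Matrix.mul_sub, Matrix.mul_one, Matrix.mul_smul, S7.mul_vmv, hSL]
    have hLX : L ᵥ* ((h - hᵀ) - Ω⁻¹ • vecMulVec (Lcheck - Lup) Lup) = Lup - Lcheck := by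
      rw [vecMul_sub, hLS, S7.vecMul_smulM, S7.vecMul_vmv, dotProduct_sub, hΩc, ← hΩ',
        sub_self, zero_smul, smul_zero, sub_zero]
    have hexp : P * ((h - hᵀ) * Pᵀ) =
        ((h - hᵀ) - Ω⁻¹ • vecMulVec (Lcheck - Lup) Lup) -
          Ω⁻¹ • vecMulVec Lup (Lup - Lcheck) := by
      rw [hSPT, hP', Matrix.sub_mul, Matrix.one_mul, Matrix.smul_mul, S7.vmv_mul, hLX]
    have hstar : h - hᵀ = Ω⁻¹ • vecMulVec (Lcheck - Lup) Lup +
        Ω⁻¹ • vecMulVec Lup (Lup - Lcheck) := by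
      rw [← Matrix.mul_assoc, H] at hexp
      have := hexp.symm
      rw [sub_sub, sub_eq_zero] at this
      exact this
    -- step 2: gᵀ - g
    have hgSg : g * (h - hᵀ) * gᵀ = gᵀ - g := by
      rw [Matrix.mul_sub, Matrix.sub_mul, hgh, Matrix.one_mul, Matrix.mul_assoc, h1,
        Matrix.mul_one]
    have hgT2 : gᵀ - g = Ω⁻¹ • vecMulVec (L - b) b + Ω⁻¹ • vecMulVec b (b - L) := by
      rw [← hgSg, hstar, Matrix.mul_add, Matrix.add_mul, Matrix.mul_smul, Matrix.mul_smul,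
        Matrix.smul_mul, Matrix.smul_mul, S7.mul_vmv, S7.mul_vmv, S7.vmv_mul, S7.vmv_mul,
        mulVec_sub, hgLc, Matrix.vecMul_transpose, Matrix.vecMul_transpose, mulVec_sub, hgLc]
    have hge : ∀ i j, g j i = g i j + Ω⁻¹ * (L i * b j) - Ω⁻¹ * (b i * L j) := by
      intro i j
      have e := congrFun (congrFun hgT2 j) i
      simp only [Matrix.sub_apply, Matrix.add_apply, Matrix.smul_apply, vecMulVec_apply,
        Matrix.transpose_apply, Pi.sub_apply, smul_eq_mul] at e
      linear_combination -e
    -- step 3: Lcheck ᵥ* g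
    set β : ℝ := b ⬝ᵥ Lcheck with hβdef
    have hgT3 : gᵀ = g + (Ω⁻¹ • vecMulVec (L - b) b + Ω⁻¹ • vecMulVec b (b - L)) := by
      rw [← hgT2, add_sub_cancel]
    have hcg : Lcheck ᵥ* g = L + (Ω⁻¹ * β) • L - b := by
      rw [← Matrix.mulVec_transpose, hgT3, add_mulVec, hgLc, add_mulVec, smul_mulVec,
        smul_mulVec, S7.vmv_mulVec, S7.vmv_mulVec, sub_dotProduct, hΩc]
      funext r
      simp only [Pi.add_apply, Pi.sub_apply, Pi.smul_apply, smul_eq_mul]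
      field_simp
      ring
    set A : Fin n → ℝ := Ω⁻¹ • (Lcheck ᵥ* g) with hAdef
    have hAe : ∀ r, A r = Ω⁻¹ * (L r + Ω⁻¹ * β * L r - b r) := by
      intro r
      rw [hAdef, Pi.smul_apply, smul_eq_mul, hcg]
      simp only [Pi.add_apply, Pi.sub_apply, Pi.smul_apply, smul_eq_mul]
    refine ⟨A, g - vecMulVec L A, ?_, ?_, ?_⟩
    · -- symmetric
      show (g - vecMulVec L A)ᵀ = g - vecMulVec L A
      ext i j
      simp only [Matrix.transpose_apply, Matrix.sub_apply, vecMulVec_apply]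
      rw [hge i j, hAe i, hAe j]
      ring
    · -- degenerate
      have hALc : A ⬝ᵥ Lcheck = 1 := by
        rw [hAdef, smul_dotProduct, ← dotProduct_mulVec, hgLc, dotProduct_comm, hΩc,
          smul_eq_mul, inv_mul_cancel₀ hΩ0]
      have huLc : (g - vecMulVec L A) *ᵥ Lcheck = 0 := by
        rw [sub_mulVec, hgLc, S7.vmv_mulVec, hALc, one_smul, sub_self]
      exact Matrix.exists_mulVec_eq_zero_iff.mp ⟨Lcheck, hLcne, huLc⟩
    · intro s r
      simp only [Matrix.sub_apply, vecMulVec_apply]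
      ring
  · -- backward: decomposition implies normality
    rintro ⟨A, u, hsym, -, hdec⟩
    have hgdec : g = u + vecMulVec L A := by
      ext s t; rw [hdec s t]; simp [vecMulVec_apply, Matrix.add_apply]
    have hgT : gᵀ = u + vecMulVec A L := by
      rw [hgdec, Matrix.transpose_add, hsym, S7.vmv_transpose]
    have hgTg : gᵀ - g = vecMulVec A L - vecMulVec L A := by
      rw [hgT, hgdec]; abel
    have hS : h - hᵀ = hᵀ * (gᵀ - g) * h := by
      rw [Matrix.mul_sub, Matrix.sub_mul, h1, Matrix.one_mul, Matrix.mul_assoc, hgh,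
        Matrix.mul_one]
    have hS2 : h - hᵀ = vecMulVec (A ᵥ* h) Lup - vecMulVec Lup (A ᵥ* h) := by
      rw [hS, hgTg, Matrix.mul_sub, Matrix.sub_mul, S7.mul_vmv, S7.mul_vmv, S7.vmv_mul,
        S7.vmv_mul]
      simp only [Matrix.mulVec_transpose]
      rw [← hLup']
    rw [hS2, Matrix.mul_sub, Matrix.sub_mul, S7.mul_vmv, S7.mul_vmv, hPLup, S7.vmv_zero_left,
      Matrix.zero_mul, sub_zero, S7.vmv_mul, Matrix.vecMul_transpose, hPLup, S7.vmv_zero_right]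
end

section
/- Let U ⊆ ℝⁿ be open, let L : U → ℝⁿ be continuously differentiable with components L_1,…,L_n, let A : U → ℝⁿ have components A_1,…,A_n, and fix a point v ∈ U. Let g be the n×n Jacobian matrix at v with entries g_{sr} = ∂L_s/∂v^r(v), and assume g is invertible, L(v) ≠ 0, and Ω := Σ_{s=1}^n L_s L^s ≠ 0, where g^{ij} are the entries of g⁻¹ and L^i = Σ_{s=1}^n L_s g^{si}. Assume that at v the equations ∂L_s/∂v^r − ∂L_r/∂v^s = L_s A_r − L_r A_s hold for all s, r, and set u_{sr} = ½(g_{sr} + g_{rs}) − ½(L_s A_r + L_r A_s). If either det u = 0, or u is invertible and Σ_{r,s} w^{rs} L_r L_s ≠ 0 with w = u⁻¹, then the normality equations hold at v: Σ_{r=1}^n Σ_{s=1}^n (g^{rs} − g^{sr}) P^i_r P^j_s = 0 for all i, j, where P^i_j = δ^i_j − L^i L_j/Ω. -/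
lemma aux_solve {n : ℕ} (M : Matrix (Fin n) (Fin n) ℝ) (h : IsUnit M.det) (x : Fin n → ℝ)
    (s : Fin n) : ∑ r, M s r * (∑ t, M⁻¹ r t * x t) = x s := by
  have h2 : M * M⁻¹ = 1 := Matrix.mul_nonsing_inv M h
  calc ∑ r, M s r * ∑ t, M⁻¹ r t * x t
      = ∑ r, ∑ t, M s r * M⁻¹ r t * x t := by
        refine Finset.sum_congr rfl fun r _ => ?_
        rw [Finset.mul_sum]
        exact Finset.sum_congr rfl fun t _ => (mul_assoc _ _ _).symm
    _ = ∑ t, (∑ r, M s r * M⁻¹ r t) * x t := by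
        rw [Finset.sum_comm]
        exact Finset.sum_congr rfl fun t _ => (Finset.sum_mul _ _ _).symm
    _ = ∑ t, (M * M⁻¹) s t * x t := by simp only [Matrix.mul_apply]
    _ = x s := by rw [h2]; simp [Matrix.one_apply]

lemma aux_uniq {n : ℕ} (M : Matrix (Fin n) (Fin n) ℝ) (h : IsUnit M.det) {x y : Fin n → ℝ}
    (hxy : ∀ s, ∑ r, M s r * y r = x s) (i : Fin n) : y i = ∑ t, M⁻¹ i t * x t := by
  have h1 : M⁻¹ * M = 1 := Matrix.nonsing_inv_mul M h
  calc y i = ∑ r, (1 : Matrix (Fin n) (Fin n) ℝ) i r * y r := by simp [Matrix.one_apply]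
    _ = ∑ r, (M⁻¹ * M) i r * y r := by rw [h1]
    _ = ∑ r, ∑ t, M⁻¹ i t * (M t r * y r) := by
        refine Finset.sum_congr rfl fun r _ => ?_
        rw [Matrix.mul_apply, Finset.sum_mul]
        exact Finset.sum_congr rfl fun t _ => by ring
    _ = ∑ t, ∑ r, M⁻¹ i t * (M t r * y r) := Finset.sum_comm
    _ = ∑ t, M⁻¹ i t * ∑ r, M t r * y r :=
        Finset.sum_congr rfl fun t _ => (Finset.mul_sum _ _ _).symm
    _ = ∑ t, M⁻¹ i t * x t := Finset.sum_congr rfl fun t _ => by rw [hxy t]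

/-- Theorem 5.1: if at a point `v` the equations
`∂L_s/∂v^r - ∂L_r/∂v^s = L_s A_r - L_r A_s` hold, with `g` the invertible Jacobian,
`L(v) ≠ 0`, `Ω ≠ 0`, and `u_{sr} = ½(g_{sr}+g_{rs}) - ½(L_s A_r + L_r A_s)` either
degenerate, or invertible with `Σ w^{rs} L_r L_s ≠ 0`, then the normality
equations hold at `v`. -/
theorem stmt9 {n : ℕ} (hn : 2 ≤ n) (U : Set (Fin n → ℝ)) (hU : IsOpen U)
    (L A : (Fin n → ℝ) → Fin n → ℝ)
    (hL : ContDiffOn ℝ 1 L U)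
    (v : Fin n → ℝ) (hv : v ∈ U)
    (g : Matrix (Fin n) (Fin n) ℝ)
    (hg : ∀ s r, g s r = fderiv ℝ (fun w => L w s) v (Pi.single r 1))
    (hgdet : IsUnit g.det) (hL0 : L v ≠ 0)
    (Lup : Fin n → ℝ) (hLup : ∀ i, Lup i = ∑ s, L v s * g⁻¹ s i)
    (Ω : ℝ) (hΩ : Ω = ∑ s, L v s * Lup s) (hΩ0 : Ω ≠ 0)
    (heq : ∀ s r, fderiv ℝ (fun w => L w s) v (Pi.single r 1)
        - fderiv ℝ (fun w => L w r) v (Pi.single s 1)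
        = L v s * A v r - L v r * A v s)
    (u : Matrix (Fin n) (Fin n) ℝ)
    (hu : ∀ s r, u s r = (g s r + g r s) / 2 - (L v s * A v r + L v r * A v s) / 2)
    (hcase : u.det = 0 ∨
      (IsUnit u.det ∧ ∑ r, ∑ s, u⁻¹ r s * L v r * L v s ≠ 0))
    (P : Matrix (Fin n) (Fin n) ℝ)
    (hP : ∀ i j, P i j = (if i = j then (1:ℝ) else 0) - Lup i * L v j / Ω) :
    ∀ i j, ∑ r, ∑ s, (g⁻¹ r s - g⁻¹ s r) * P i r * P j s = 0 := by
  -- basic facts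
  have hganti : ∀ s r, g s r - g r s = L v s * A v r - L v r * A v s := by
    intro s r; rw [hg s r, hg r s]; exact heq s r
  have husymm : ∀ s r, u s r = u r s := by intro s r; rw [hu, hu]; ring
  have hu_g : ∀ s r, u s r = g s r - L v s * A v r := by
    intro s r; have h1 := hu s r; have h2 := hganti s r; linarith
  have hu_g' : ∀ s r, u s r = g r s - L v r * A v s := by
    intro s r; rw [husymm]; exact hu_g r s
  have hinv1 : g⁻¹ * g = 1 := Matrix.nonsing_inv_mul g hgdet
  set c : Fin n → ℝ := fun i => ∑ t, g⁻¹ i t * L v t with hc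
  set b : Fin n → ℝ := fun i => ∑ t, g⁻¹ i t * A v t with hb
  have hgc : ∀ s, ∑ r, g s r * c r = L v s := fun s => aux_solve g hgdet (L v) s
  have hgb : ∀ s, ∑ r, g s r * b r = A v s := fun s => aux_solve g hgdet (A v) s
  -- Lup is solution of transposed system
  have hLupg : ∀ s, ∑ r, g r s * Lup r = L v s := by
    intro s
    calc ∑ r, g r s * Lup r = ∑ r, ∑ t, L v t * (g⁻¹ t r * g r s) := by
          refine Finset.sum_congr rfl fun r _ => ?_
          rw [hLup r, Finset.mul_sum]
          exact Finset.sum_congr rfl fun t _ => by ring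
      _ = ∑ t, L v t * ∑ r, g⁻¹ t r * g r s := by
          rw [Finset.sum_comm]
          exact Finset.sum_congr rfl fun t _ => (Finset.mul_sum _ _ _).symm
      _ = ∑ t, L v t * (g⁻¹ * g) t s := by simp only [Matrix.mul_apply]
      _ = L v s := by rw [hinv1]; simp [Matrix.one_apply]
  -- the key antisymmetry identity
  have key1 : ∀ r s, g⁻¹ r s - g⁻¹ s r = b r * c s - c r * b s := by
    intro r s
    have eA : ∑ p, ∑ q, g⁻¹ r p * g q p * g⁻¹ s q = g⁻¹ r s := by
      calc ∑ p, ∑ q, g⁻¹ r p * g q p * g⁻¹ s q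
          = ∑ p, g⁻¹ r p * ∑ q, g⁻¹ s q * g q p := by
            refine Finset.sum_congr rfl fun p _ => ?_
            rw [Finset.mul_sum]
            exact Finset.sum_congr rfl fun q _ => by ring
        _ = ∑ p, g⁻¹ r p * (g⁻¹ * g) s p := by simp only [Matrix.mul_apply]
        _ = g⁻¹ r s := by rw [hinv1]; simp [Matrix.one_apply]
    have eB : ∑ p, ∑ q, g⁻¹ r p * g p q * g⁻¹ s q = g⁻¹ s r := by
      calc ∑ p, ∑ q, g⁻¹ r p * g p q * g⁻¹ s q
          = ∑ q, ∑ p, g⁻¹ r p * g p q * g⁻¹ s q := Finset.sum_comm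
        _ = ∑ q, g⁻¹ s q * ∑ p, g⁻¹ r p * g p q := by
            refine Finset.sum_congr rfl fun q _ => ?_
            rw [Finset.mul_sum]
            exact Finset.sum_congr rfl fun p _ => by ring
        _ = ∑ q, g⁻¹ s q * (g⁻¹ * g) r q := by simp only [Matrix.mul_apply]
        _ = g⁻¹ s r := by rw [hinv1]; simp [Matrix.one_apply]
    calc g⁻¹ r s - g⁻¹ s r
        = ∑ p, ∑ q, (g⁻¹ r p * g q p * g⁻¹ s q - g⁻¹ r p * g p q * g⁻¹ s q) := by
          rw [← eA, ← eB, ← Finset.sum_sub_distrib]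
          exact Finset.sum_congr rfl fun p _ => (Finset.sum_sub_distrib _ _).symm
      _ = ∑ p, ∑ q, ((g⁻¹ r p * A v p) * (g⁻¹ s q * L v q)
            - (g⁻¹ r p * L v p) * (g⁻¹ s q * A v q)) := by
          refine Finset.sum_congr rfl fun p _ => Finset.sum_congr rfl fun q _ => ?_
          linear_combination (g⁻¹ r p * g⁻¹ s q) * hganti q p
      _ = (∑ p, g⁻¹ r p * A v p) * (∑ q, g⁻¹ s q * L v q)
            - (∑ p, g⁻¹ r p * L v p) * (∑ q, g⁻¹ s q * A v q) := by
          rw [Finset.sum_mul_sum, Finset.sum_mul_sum, ← Finset.sum_sub_distrib]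
          refine Finset.sum_congr rfl fun p _ => ?_
          rw [← Finset.sum_sub_distrib]
      _ = b r * c s - c r * b s := rfl
  -- u applied to c, b, Lup
  have hUc : ∀ s, ∑ r, u s r * c r = (1 - ∑ t, A v t * c t) * L v s := by
    intro s
    calc ∑ r, u s r * c r = ∑ r, (g s r * c r - L v s * (A v r * c r)) := by
          refine Finset.sum_congr rfl fun r _ => ?_
          linear_combination (c r) * hu_g s r
      _ = (∑ r, g s r * c r) - L v s * ∑ r, A v r * c r := by
          rw [Finset.sum_sub_distrib, Finset.mul_sum]
      _ = (1 - ∑ t, A v t * c t) * L v s := by rw [hgc s]; ring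
  have hUb : ∀ s, ∑ r, u s r * b r = A v s - (∑ t, A v t * b t) * L v s := by
    intro s
    calc ∑ r, u s r * b r = ∑ r, (g s r * b r - L v s * (A v r * b r)) := by
          refine Finset.sum_congr rfl fun r _ => ?_
          linear_combination (b r) * hu_g s r
      _ = (∑ r, g s r * b r) - L v s * ∑ r, A v r * b r := by
          rw [Finset.sum_sub_distrib, Finset.mul_sum]
      _ = A v s - (∑ t, A v t * b t) * L v s := by rw [hgb s]; ring
  have hULup : ∀ s, ∑ r, u s r * Lup r = L v s - Ω * A v s := by
    intro s
    calc ∑ r, u s r * Lup r = ∑ r, (g r s * Lup r - A v s * (L v r * Lup r)) := by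
          refine Finset.sum_congr rfl fun r _ => ?_
          linear_combination (Lup r) * hu_g' s r
      _ = (∑ r, g r s * Lup r) - A v s * ∑ r, L v r * Lup r := by
          rw [Finset.sum_sub_distrib, Finset.mul_sum]
      _ = L v s - Ω * A v s := by rw [hLupg s, ← hΩ]; ring
  -- symmetry of u in dot products
  have hsymdot : ∀ x y : Fin n → ℝ,
      ∑ s, x s * (∑ r, u s r * y r) = ∑ r, y r * (∑ s, u r s * x s) := by
    intro x y
    calc ∑ s, x s * (∑ r, u s r * y r) = ∑ s, ∑ r, y r * (u r s * x s) := by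
          refine Finset.sum_congr rfl fun s _ => ?_
          rw [Finset.mul_sum]
          refine Finset.sum_congr rfl fun r _ => ?_
          rw [husymm s r]; ring
      _ = ∑ r, ∑ s, y r * (u r s * x s) := Finset.sum_comm
      _ = ∑ r, y r * ∑ s, u r s * x s :=
          Finset.sum_congr rfl fun r _ => (Finset.mul_sum _ _ _).symm
  -- action of P
  have hPapp : ∀ (x : Fin n → ℝ) i,
      ∑ r, P i r * x r = x i - Lup i * (∑ r, L v r * x r) / Ω := by
    intro x i
    calc ∑ r, P i r * x r
        = ∑ r, ((if i = r then x r else 0) - Lup i / Ω * (L v r * x r)) := by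
          refine Finset.sum_congr rfl fun r _ => ?_
          rw [hP i r]; split_ifs <;> ring
      _ = (∑ r, if i = r then x r else 0) - Lup i / Ω * ∑ r, L v r * x r := by
          rw [Finset.sum_sub_distrib, Finset.mul_sum]
      _ = x i - Lup i * (∑ r, L v r * x r) / Ω := by
          rw [Finset.sum_ite_eq]
          simp only [Finset.mem_univ, if_true]
          ring
  have hPLup : ∀ i, ∑ r, P i r * Lup r = 0 := by
    intro i
    rw [hPapp Lup i, ← hΩ, mul_div_assoc, div_self hΩ0, mul_one, sub_self]
  have hPlin : ∀ (x y : Fin n → ℝ) (a e : ℝ), (∀ r, x r = a * y r + e * Lup r) →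
      ∀ i, ∑ r, P i r * x r = a * ∑ r, P i r * y r := by
    intro x y a e hx i
    calc ∑ r, P i r * x r = ∑ r, (a * (P i r * y r) + e * (P i r * Lup r)) := by
          refine Finset.sum_congr rfl fun r _ => ?_
          rw [hx r]; ring
      _ = a * (∑ r, P i r * y r) + e * (∑ r, P i r * Lup r) := by
          rw [Finset.sum_add_distrib, Finset.mul_sum, Finset.mul_sum]
      _ = a * ∑ r, P i r * y r := by rw [hPLup i]; ring
  -- the two P-images are proportional
  obtain ⟨α, β, q, hbP, hcP⟩ : ∃ (α β : ℝ) (q : Fin n → ℝ),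
      (∀ i, ∑ r, P i r * b r = α * q i) ∧ (∀ i, ∑ r, P i r * c r = β * q i) := by
    have hcdef : ∀ i, c i = ∑ t, g⁻¹ i t * L v t := fun i => by rw [hc]
    rcases hcase with hdet | ⟨hud, -⟩
    · -- degenerate case
      obtain ⟨z, hz0, hzu⟩ := (Matrix.exists_mulVec_eq_zero_iff).mpr hdet
      have hz : ∀ s, ∑ r, u s r * z r = 0 := by
        intro s
        simpa [Matrix.mulVec, dotProduct] using congrFun hzu s
      have hkerg : ∀ x : Fin n → ℝ, (∀ s, ∑ r, u s r * x r = 0) →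
          ∀ s, ∑ r, g s r * x r = (∑ t, A v t * x t) * L v s := by
        intro x hx s
        calc ∑ r, g s r * x r = ∑ r, (u s r * x r + L v s * (A v r * x r)) := by
              refine Finset.sum_congr rfl fun r _ => ?_
              linear_combination (-(x r)) * hu_g s r
          _ = (∑ r, u s r * x r) + L v s * ∑ r, A v r * x r := by
              rw [Finset.sum_add_distrib, Finset.mul_sum]
          _ = (∑ t, A v t * x t) * L v s := by rw [hx s]; ring
      have hkerc : ∀ x : Fin n → ℝ, (∀ s, ∑ r, u s r * x r = 0) →
          ∀ i, x i = (∑ t, A v t * x t) * c i := by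
        intro x hx i
        rw [aux_uniq g hgdet (x := fun s => (∑ t, A v t * x t) * L v s) (hkerg x hx) i,
          hcdef i, Finset.mul_sum]
        exact Finset.sum_congr rfl fun t _ => by ring
      have hAz : (∑ t, A v t * z t) ≠ 0 := by
        intro h0
        apply hz0
        funext i
        simpa [h0] using hkerc z hz i
      have e1' : ∑ s, z s * (L v s - Ω * A v s) = 0 := by
        calc ∑ s, z s * (L v s - Ω * A v s) = ∑ s, z s * (∑ r, u s r * Lup r) := by
              refine Finset.sum_congr rfl fun s _ => by rw [hULup s]
          _ = ∑ r, Lup r * (∑ s, u r s * z s) := hsymdot z Lup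
          _ = 0 := Finset.sum_eq_zero fun r _ => by rw [hz r, mul_zero]
      have hzL : ∑ s, z s * L v s = Ω * ∑ s, z s * A v s := by
        have h3 : (∑ s, z s * L v s) - Ω * ∑ s, z s * A v s = 0 := by
          rw [Finset.mul_sum, ← Finset.sum_sub_distrib, ← e1']
          exact Finset.sum_congr rfl fun s _ => by ring
        linarith
      have e2' : ∑ s, z s * (A v s - (∑ t, A v t * b t) * L v s) = 0 := by
        calc ∑ s, z s * (A v s - (∑ t, A v t * b t) * L v s)
            = ∑ s, z s * (∑ r, u s r * b r) := by
              refine Finset.sum_congr rfl fun s _ => by rw [hUb s]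
          _ = ∑ r, b r * (∑ s, u r s * z s) := hsymdot z b
          _ = 0 := Finset.sum_eq_zero fun r _ => by rw [hz r, mul_zero]
      have hzA : ∑ s, z s * A v s ≠ 0 := by
        have hcomm : ∑ s, z s * A v s = ∑ t, A v t * z t :=
          Finset.sum_congr rfl fun s _ => mul_comm _ _
        rw [hcomm]; exact hAz
      have hμΩ : (∑ t, A v t * b t) * Ω = 1 := by
        have h4 : (∑ s, z s * A v s) - (∑ t, A v t * b t) * ∑ s, z s * L v s = 0 := by
          rw [Finset.mul_sum, ← Finset.sum_sub_distrib, ← e2']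
          exact Finset.sum_congr rfl fun s _ => by ring
        rw [hzL] at h4
        have h5 : (∑ s, z s * A v s) * (1 - (∑ t, A v t * b t) * Ω) = 0 := by
          linear_combination h4
        rcases mul_eq_zero.mp h5 with h | h
        · exact absurd h hzA
        · linarith
      set k : Fin n → ℝ := fun r => Lup r + Ω * b r with hk
      have hkdef : ∀ r, k r = Lup r + Ω * b r := fun r => by rw [hk]
      have hUk : ∀ s, ∑ r, u s r * k r = 0 := by
        intro s
        calc ∑ r, u s r * k r = ∑ r, (u s r * Lup r + Ω * (u s r * b r)) := by
              refine Finset.sum_congr rfl fun r _ => ?_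
              rw [hkdef r]; ring
          _ = (∑ r, u s r * Lup r) + Ω * ∑ r, u s r * b r := by
              rw [Finset.sum_add_distrib, Finset.mul_sum]
          _ = 0 := by
              rw [hULup s, hUb s]
              linear_combination (-(L v s)) * hμΩ
      have hkc := hkerc k hUk
      refine ⟨(∑ t, A v t * k t) / Ω, 1, fun i => ∑ r, P i r * c r, ?_, ?_⟩
      · intro i
        refine hPlin b c ((∑ t, A v t * k t) / Ω) (-(1/Ω)) (fun r => ?_) i
        have h6 := hkc r
        rw [hkdef r] at h6
        field_simp
        linear_combination h6
      · intro i
        exact hPlin c c 1 0 (fun r => by ring) i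
    · -- invertible case
      set wL : Fin n → ℝ := fun i => ∑ t, u⁻¹ i t * L v t with hwL
      have hwLdef : ∀ i, wL i = ∑ t, u⁻¹ i t * L v t := fun i => by rw [hwL]
      have hc2 : ∀ i, c i = (1 - ∑ t, A v t * c t) * wL i := by
        intro i
        rw [aux_uniq u hud (x := fun s => (1 - ∑ t, A v t * c t) * L v s) hUc i,
          hwLdef i, Finset.mul_sum]
        exact Finset.sum_congr rfl fun t _ => by ring
      have hL2 : ∀ i, Lup i = wL i - Ω * (∑ t, u⁻¹ i t * A v t) := by
        intro i
        rw [aux_uniq u hud (x := fun s => L v s - Ω * A v s) hULup i,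
          hwLdef i, Finset.mul_sum]
        rw [← Finset.sum_sub_distrib]
        exact Finset.sum_congr rfl fun t _ => by ring
      have hb2 : ∀ i, b i = (∑ t, u⁻¹ i t * A v t) - (∑ t, A v t * b t) * wL i := by
        intro i
        rw [aux_uniq u hud (x := fun s => A v s - (∑ t, A v t * b t) * L v s) hUb i,
          hwLdef i, Finset.mul_sum]
        rw [← Finset.sum_sub_distrib]
        exact Finset.sum_congr rfl fun t _ => by ring
      refine ⟨1/Ω - (∑ t, A v t * b t), 1 - ∑ t, A v t * c t,
        fun i => ∑ r, P i r * wL r, ?_, ?_⟩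
      · intro i
        refine hPlin b wL (1/Ω - (∑ t, A v t * b t)) (-(1/Ω)) (fun r => ?_) i
        have h1 := hb2 r
        have h2 := hL2 r
        field_simp
        linear_combination Ω * h1 + h2
      · intro i
        exact hPlin c wL (1 - ∑ t, A v t * c t) 0 (fun r => by rw [hc2 r]; ring) i
  intro i j
  calc ∑ r, ∑ s, (g⁻¹ r s - g⁻¹ s r) * P i r * P j s
      = ∑ r, ∑ s, (b r * c s - c r * b s) * P i r * P j s := by
        refine Finset.sum_congr rfl fun r _ => Finset.sum_congr rfl fun s _ => ?_
        rw [key1 r s]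
    _ = (∑ r, P i r * b r) * (∑ s, P j s * c s)
        - (∑ r, P i r * c r) * (∑ s, P j s * b s) := by
        rw [Finset.sum_mul_sum, Finset.sum_mul_sum, ← Finset.sum_sub_distrib]
        refine Finset.sum_congr rfl fun r _ => ?_
        rw [← Finset.sum_sub_distrib]
        exact Finset.sum_congr rfl fun s _ => by ring
    _ = 0 := by rw [hbP i, hbP j, hcP i, hcP j]; ring
end

section
/- For every integer k ≥ 2 and every integer i with 0 ≤ 2i < k, the normality coefficient C^i_k equals the difference of binomial coefficients C(k−2, i) − C(k−2, k−i), where C(n, m) denotes the binomial coefficient (with the convention C(n, m) = 0 for m > n). In particular C^i_k can be written as ∏_{s=1}^{i} (k−1−s)/s − ∏_{s=1}^{k−i} (k−1−s)/s. -/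
/-- The normality coefficients `C^i_k` (first argument: subscript `k`, second:
superscript `i`), defined by `C^0_1 = 1` and the recurrence
`C^i_{k+1} = 1` if `i = 0`; `C^{i-1}_k + C^i_k` if `0 < 2i < k`; `C^{i-1}_k` if `2i = k`.
(Values outside the domain `0 ≤ 2i < k`, `k ≥ 1` are junk values `0`.) -/
def normCoeff : ℕ → ℕ → ℤ
  | 0, _ => 0
  | k + 1, i =>
    if i = 0 then 1
    else if 2 * i < k then normCoeff k (i - 1) + normCoeff k i
    else if 2 * i = k then normCoeff k (i - 1)
    else 0

lemma normCoeff_eq_choose_sub : ∀ k, 2 ≤ k → ∀ i, 2 * i < k →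
    normCoeff k i = (Nat.choose (k - 2) i : ℤ) - (Nat.choose (k - 2) (k - i) : ℤ) := by
  intro k
  induction k with
  | zero => omega
  | succ k ih =>
    intro hk i hi
    simp only [normCoeff]
    by_cases h0 : i = 0
    · subst h0
      simp [Nat.choose_eq_zero_of_lt (show k - 1 < k + 1 by omega)]
    · obtain ⟨j, rfl⟩ : ∃ j, i = j + 1 := ⟨i - 1, by omega⟩
      simp only [h0, if_false, Nat.add_sub_cancel]
      by_cases h1 : 2 * (j + 1) < k
      · rw [if_pos h1]
        obtain ⟨n, rfl⟩ : ∃ n, k = n + 2 := ⟨k - 2, by omega⟩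
        rw [ih (by omega) j (by omega), ih (by omega) (j + 1) (by omega)]
        have e1 : n + 2 + 1 - 2 = n + 1 := by omega
        have e2 : n + 2 - 2 = n := by omega
        have e3 : n + 2 + 1 - (j + 1) = (n - j) + 2 := by omega
        have e4 : n + 2 - (j + 1) = (n - j) + 1 := by omega
        have e5 : n + 2 - j = (n - j) + 2 := by omega
        have e6 : (n - j) + 2 = ((n - j) + 1) + 1 := rfl
        rw [e1, e2, e3, e4, e5, e6, Nat.choose_succ_succ' n j,
          Nat.choose_succ_succ' n ((n - j) + 1)]
        omega
      · have h2 : 2 * (j + 1) = k := by omega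
        rw [if_neg h1, if_pos h2]
        obtain ⟨n, rfl⟩ : ∃ n, k = n + 2 := ⟨k - 2, by omega⟩
        rw [ih (by omega) j (by omega)]
        have e1 : n + 2 + 1 - 2 = n + 1 := by omega
        have e2 : n + 2 - 2 = n := by omega
        have e3 : n + 2 + 1 - (j + 1) = (j + 1) + 1 := by omega
        have e4 : n + 2 - j = (j + 1) + 1 := by omega
        rw [e1, e2, e3, e4, Nat.choose_succ_succ' n j,
          Nat.choose_succ_succ' n (j + 1)]
        omega

lemma prod_ratio_eq_choose (k : ℕ) (hk : 2 ≤ k) :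
    ∀ m, m ≤ k → (∏ s ∈ Finset.Icc 1 m, (((k : ℚ) - 1 - (s : ℚ)) / (s : ℚ)))
      = (Nat.choose (k - 2) m : ℚ) := by
  intro m
  induction m with
  | zero => simp
  | succ m ih =>
    intro hm
    rw [Finset.prod_Icc_succ_top (by omega), ih (by omega)]
    by_cases h : m + 1 ≤ k - 1
    · have e1 : ((k : ℚ) - 1 - ((m + 1 : ℕ) : ℚ)) = ((k - 2 - m : ℕ) : ℚ) := by
        rw [Nat.cast_sub (by omega), Nat.cast_sub (by omega)]
        push_cast
        ring
      have key := Nat.choose_succ_right_eq (k - 2) m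
      have key' : ((k - 2).choose (m + 1) : ℚ) * ((m + 1 : ℕ) : ℚ)
          = ((k - 2).choose m : ℚ) * ((k - 2 - m : ℕ) : ℚ) := by
        exact_mod_cast congrArg (Nat.cast : ℕ → ℚ) key
      rw [e1]
      have hm1 : ((m + 1 : ℕ) : ℚ) ≠ 0 := by positivity
      field_simp
      push_cast at key' ⊢
      linarith [key']
    · have hz : ((k - 2).choose (m + 1) : ℚ) = 0 := by
        rw [Nat.choose_eq_zero_of_lt (by omega)]; simp
      have hz2 : ((k - 2).choose m : ℚ) = 0 := by
        rw [Nat.choose_eq_zero_of_lt (by omega)]; simp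
      rw [hz, hz2, zero_mul]

/-- for `k ≥ 2` and `0 ≤ 2i < k`, `C^i_k = C(k-2, i) - C(k-2, k-i)`;
in particular `C^i_k = ∏_{s=1}^{i} (k-1-s)/s - ∏_{s=1}^{k-i} (k-1-s)/s`. -/
theorem stmt12 (k i : ℕ) (hk : 2 ≤ k) (hi : 2 * i < k) :
    normCoeff k i = (Nat.choose (k - 2) i : ℤ) - (Nat.choose (k - 2) (k - i) : ℤ) ∧
    (normCoeff k i : ℚ) =
      (∏ s ∈ Finset.Icc 1 i, (((k : ℚ) - 1 - (s : ℚ)) / (s : ℚ)))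
      - (∏ s ∈ Finset.Icc 1 (k - i), (((k : ℚ) - 1 - (s : ℚ)) / (s : ℚ))) := by
  have hA := normCoeff_eq_choose_sub k hk i hi
  refine ⟨hA, ?_⟩
  rw [prod_ratio_eq_choose k hk i (by omega), prod_ratio_eq_choose k hk (k - i) (by omega), hA]
  push_cast
  ring
end

section
/- For all integers k, i, s satisfying 1 ≤ s, 2s ≤ i, 2i ≤ k, and 2i − k < s, the normality coefficients satisfy the identity C^i_{k+1}·C^s_{i+1} − C^s_{k+1}·C^{i+1−s}_{k+2−s} + C^{i+1−s}_{k+1}·C^s_{k+1−i+s} = 0. -/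
lemma normCoeff_closed : ∀ n m : ℕ, 1 ≤ m → 2 * m ≤ n →
    normCoeff (n + 1) m = (n.choose m : ℤ) - n.choose (m - 1) := by
  intro n
  induction n with
  | zero => intro m hm h; omega
  | succ n ih =>
    intro m hm h
    obtain ⟨m, rfl⟩ : ∃ m', m = m' + 1 := ⟨m - 1, by omega⟩
    rw [normCoeff]
    rw [if_neg (by omega)]
    by_cases hlt : 2 * (m + 1) < n + 1
    · rw [if_pos hlt]
      simp only [Nat.add_sub_cancel]
      rcases Nat.eq_zero_or_pos m with rfl | hm1
      · -- m+1 = 1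
        rw [ih 1 le_rfl (by omega)]
        obtain ⟨n', rfl⟩ : ∃ n', n = n' + 1 := ⟨n - 1, by omega⟩
        rw [normCoeff, if_pos rfl]
        simp [Nat.choose_one_right, Nat.choose_succ_succ]
      · obtain ⟨m, rfl⟩ : ∃ m', m = m' + 1 := ⟨m - 1, by omega⟩
        rw [ih (m + 1) (by omega) (by omega), ih (m + 2) (by omega) (by omega)]
        simp only [Nat.add_sub_cancel, Nat.choose_succ_succ (n) (m+1), Nat.choose_succ_succ n m]
        push_cast ; ring
    · have heq : 2 * (m + 1) = n + 1 := by omega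
      rw [if_neg hlt, if_pos heq]
      simp only [Nat.add_sub_cancel]
      rcases Nat.eq_zero_or_pos m with rfl | hm1
      · -- n = 1
        have : n = 1 := by omega
        subst this
        norm_num [normCoeff]
      · obtain ⟨m, rfl⟩ : ∃ m', m = m' + 1 := ⟨m - 1, by omega⟩
        rw [ih (m + 1) (by omega) (by omega)]
        simp only [Nat.add_sub_cancel, Nat.choose_succ_succ (n) (m+1), Nat.choose_succ_succ n m]
        have hsym : n.choose (m + 2) = n.choose (m + 1) := by
          have : n = 2 * m + 3 := by omega
          subst this
          rw [← Nat.choose_symm (by omega)]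
          congr 1 ; omega
        rw [hsym] ; push_cast ; ring


open Nat in
lemma cast_choose' (n k m : ℕ) (h : n = k + m) : (n.choose k : ℚ) = n ! / (k ! * m !) := by
  subst h
  have h2 : (k + m).choose k * (k ! * m !) = (k + m)! := by
    rw [← mul_assoc, Nat.choose_symm_add]; exact Nat.add_choose_mul_factorial_mul_factorial k m
  rw [eq_div_iff (by positivity)]
  exact_mod_cast h2

set_option maxHeartbeats 2000000 in
open Nat in
lemma key (t a b : ℕ) :
    (((4*t+2*a+b+4).choose (2*t+a+2) : ℚ) - ((4*t+2*a+b+4).choose (2*t+a+1) : ℚ))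
      * (((2*t+a+2).choose (t+1) : ℚ) - ((2*t+a+2).choose t : ℚ))
    - (((4*t+2*a+b+4).choose (t+1) : ℚ) - ((4*t+2*a+b+4).choose t : ℚ))
      * (((3*t+2*a+b+4).choose (t+a+2) : ℚ) - ((3*t+2*a+b+4).choose (t+a+1) : ℚ))
    + (((4*t+2*a+b+4).choose (t+a+2) : ℚ) - ((4*t+2*a+b+4).choose (t+a+1) : ℚ))
      * (((3*t+a+b+3).choose (t+1) : ℚ) - ((3*t+a+b+3).choose t : ℚ)) = 0 := by
  have hC1 : ((4*t+2*a+b+4).choose (2*t+a+2) : ℚ) = ((4*t+2*a+b+4)! : ℚ) / ((((2*t+a+2:ℕ)):ℚ) * ((2*t+a+1)! : ℚ) * ((2*t+a+b+2)! : ℚ)) := by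
    rw [cast_choose' (4*t+2*a+b+4) (2*t+a+2) (2*t+a+b+2) (by ring)]
    rw [show (2*t+a+2:ℕ) = (2*t+a+1) + 1 by ring]
    simp only [Nat.factorial_succ]
    push_cast
    ring
  have hC2 : ((4*t+2*a+b+4).choose (2*t+a+1) : ℚ) = ((4*t+2*a+b+4)! : ℚ) / (((2*t+a+1)! : ℚ) * (((2*t+a+b+3:ℕ)):ℚ) * ((2*t+a+b+2)! : ℚ)) := by
    rw [cast_choose' (4*t+2*a+b+4) (2*t+a+1) (2*t+a+b+3) (by ring)]
    rw [show (2*t+a+b+3:ℕ) = (2*t+a+b+2) + 1 by ring]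
    simp only [Nat.factorial_succ]
    push_cast
    ring
  have hC3 : ((2*t+a+2).choose (t+1) : ℚ) = (((2*t+a+2:ℕ)):ℚ) * ((2*t+a+1)! : ℚ) / ((((t+1:ℕ)):ℚ) * ((t)! : ℚ) * ((t+a+1)! : ℚ)) := by
    rw [cast_choose' (2*t+a+2) (t+1) (t+a+1) (by ring)]
    rw [show (2*t+a+2:ℕ) = (2*t+a+1) + 1 by ring]
    simp only [Nat.factorial_succ]
    push_cast
    ring
  have hC4 : ((2*t+a+2).choose (t) : ℚ) = (((2*t+a+2:ℕ)):ℚ) * ((2*t+a+1)! : ℚ) / (((t)! : ℚ) * (((t+a+2:ℕ)):ℚ) * ((t+a+1)! : ℚ)) := by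
    rw [cast_choose' (2*t+a+2) (t) (t+a+2) (by ring)]
    rw [show (2*t+a+2:ℕ) = (2*t+a+1) + 1 by ring, show (t+a+2:ℕ) = (t+a+1) + 1 by ring]
    simp only [Nat.factorial_succ]
    push_cast
    ring
  have hC5 : ((4*t+2*a+b+4).choose (t+1) : ℚ) = ((4*t+2*a+b+4)! : ℚ) / ((((t+1:ℕ)):ℚ) * ((t)! : ℚ) * ((3*t+2*a+b+3)! : ℚ)) := by
    rw [cast_choose' (4*t+2*a+b+4) (t+1) (3*t+2*a+b+3) (by ring)]
    simp only [Nat.factorial_succ]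
    push_cast
    ring
  have hC6 : ((4*t+2*a+b+4).choose (t) : ℚ) = ((4*t+2*a+b+4)! : ℚ) / (((t)! : ℚ) * (((3*t+2*a+b+4:ℕ)):ℚ) * ((3*t+2*a+b+3)! : ℚ)) := by
    rw [cast_choose' (4*t+2*a+b+4) (t) (3*t+2*a+b+4) (by ring)]
    rw [show (3*t+2*a+b+4:ℕ) = (3*t+2*a+b+3) + 1 by ring]
    simp only [Nat.factorial_succ]
    push_cast
    ring
  have hC7 : ((3*t+2*a+b+4).choose (t+a+2) : ℚ) = (((3*t+2*a+b+4:ℕ)):ℚ) * ((3*t+2*a+b+3)! : ℚ) / ((((t+a+2:ℕ)):ℚ) * ((t+a+1)! : ℚ) * ((2*t+a+b+2)! : ℚ)) := by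
    rw [cast_choose' (3*t+2*a+b+4) (t+a+2) (2*t+a+b+2) (by ring)]
    rw [show (3*t+2*a+b+4:ℕ) = (3*t+2*a+b+3) + 1 by ring, show (t+a+2:ℕ) = (t+a+1) + 1 by ring]
    simp only [Nat.factorial_succ]
    push_cast
    ring
  have hC8 : ((3*t+2*a+b+4).choose (t+a+1) : ℚ) = (((3*t+2*a+b+4:ℕ)):ℚ) * ((3*t+2*a+b+3)! : ℚ) / (((t+a+1)! : ℚ) * (((2*t+a+b+3:ℕ)):ℚ) * ((2*t+a+b+2)! : ℚ)) := by
    rw [cast_choose' (3*t+2*a+b+4) (t+a+1) (2*t+a+b+3) (by ring)]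
    rw [show (3*t+2*a+b+4:ℕ) = (3*t+2*a+b+3) + 1 by ring, show (2*t+a+b+3:ℕ) = (2*t+a+b+2) + 1 by ring]
    simp only [Nat.factorial_succ]
    push_cast
    ring
  have hC9 : ((4*t+2*a+b+4).choose (t+a+2) : ℚ) = ((4*t+2*a+b+4)! : ℚ) / ((((t+a+2:ℕ)):ℚ) * ((t+a+1)! : ℚ) * ((3*t+a+b+2)! : ℚ)) := by
    rw [cast_choose' (4*t+2*a+b+4) (t+a+2) (3*t+a+b+2) (by ring)]
    rw [show (t+a+2:ℕ) = (t+a+1) + 1 by ring]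
    simp only [Nat.factorial_succ]
    push_cast
    ring
  have hC10 : ((4*t+2*a+b+4).choose (t+a+1) : ℚ) = ((4*t+2*a+b+4)! : ℚ) / (((t+a+1)! : ℚ) * (((3*t+a+b+3:ℕ)):ℚ) * ((3*t+a+b+2)! : ℚ)) := by
    rw [cast_choose' (4*t+2*a+b+4) (t+a+1) (3*t+a+b+3) (by ring)]
    rw [show (3*t+a+b+3:ℕ) = (3*t+a+b+2) + 1 by ring]
    simp only [Nat.factorial_succ]
    push_cast
    ring
  have hC11 : ((3*t+a+b+3).choose (t+1) : ℚ) = (((3*t+a+b+3:ℕ)):ℚ) * ((3*t+a+b+2)! : ℚ) / ((((t+1:ℕ)):ℚ) * ((t)! : ℚ) * ((2*t+a+b+2)! : ℚ)) := by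
    rw [cast_choose' (3*t+a+b+3) (t+1) (2*t+a+b+2) (by ring)]
    rw [show (3*t+a+b+3:ℕ) = (3*t+a+b+2) + 1 by ring]
    simp only [Nat.factorial_succ]
    push_cast
    ring
  have hC12 : ((3*t+a+b+3).choose (t) : ℚ) = (((3*t+a+b+3:ℕ)):ℚ) * ((3*t+a+b+2)! : ℚ) / (((t)! : ℚ) * (((2*t+a+b+3:ℕ)):ℚ) * ((2*t+a+b+2)! : ℚ)) := by
    rw [cast_choose' (3*t+a+b+3) (t) (2*t+a+b+3) (by ring)]
    rw [show (3*t+a+b+3:ℕ) = (3*t+a+b+2) + 1 by ring, show (2*t+a+b+3:ℕ) = (2*t+a+b+2) + 1 by ring]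
    simp only [Nat.factorial_succ]
    push_cast
    ring
  have hz0 : (((t)! : ℕ) : ℚ) ≠ 0 := Nat.cast_ne_zero.mpr (Nat.factorial_ne_zero _)
  have hz1 : (((t+a+1)! : ℕ) : ℚ) ≠ 0 := Nat.cast_ne_zero.mpr (Nat.factorial_ne_zero _)
  have hz2 : (((2*t+a+1)! : ℕ) : ℚ) ≠ 0 := Nat.cast_ne_zero.mpr (Nat.factorial_ne_zero _)
  have hz3 : (((2*t+a+b+2)! : ℕ) : ℚ) ≠ 0 := Nat.cast_ne_zero.mpr (Nat.factorial_ne_zero _)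
  have hz4 : (((3*t+2*a+b+3)! : ℕ) : ℚ) ≠ 0 := Nat.cast_ne_zero.mpr (Nat.factorial_ne_zero _)
  have hz5 : (((3*t+a+b+2)! : ℕ) : ℚ) ≠ 0 := Nat.cast_ne_zero.mpr (Nat.factorial_ne_zero _)
  have hz6 : (((4*t+2*a+b+4)! : ℕ) : ℚ) ≠ 0 := Nat.cast_ne_zero.mpr (Nat.factorial_ne_zero _)
  have hw0 : ((t+1 : ℕ) : ℚ) ≠ 0 := Nat.cast_ne_zero.mpr (by omega)
  have hw1 : ((t+a+2 : ℕ) : ℚ) ≠ 0 := Nat.cast_ne_zero.mpr (by omega)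
  have hw2 : ((2*t+a+2 : ℕ) : ℚ) ≠ 0 := Nat.cast_ne_zero.mpr (by omega)
  have hw3 : ((2*t+a+b+3 : ℕ) : ℚ) ≠ 0 := Nat.cast_ne_zero.mpr (by omega)
  have hw4 : ((3*t+2*a+b+4 : ℕ) : ℚ) ≠ 0 := Nat.cast_ne_zero.mpr (by omega)
  have hw5 : ((3*t+a+b+3 : ℕ) : ℚ) ≠ 0 := Nat.cast_ne_zero.mpr (by omega)
  rw [hC1, hC2, hC3, hC4, hC5, hC6, hC7, hC8, hC9, hC10, hC11, hC12]
  field_simp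
  push_cast
  ring

/-- identity (6.27): for `1 ≤ s`, `2s ≤ i`, `2i ≤ k`, `2i - k < s`,
`C^i_{k+1} C^s_{i+1} - C^s_{k+1} C^{i+1-s}_{k+2-s} + C^{i+1-s}_{k+1} C^s_{k+1-i+s} = 0`. -/
theorem stmt14 (k i s : ℕ) (hs : 1 ≤ s) (hsi : 2 * s ≤ i) (hik : 2 * i ≤ k)
    (hk : 2 * (i : ℤ) - (k : ℤ) < (s : ℤ)) :
    normCoeff (k + 1) i * normCoeff (i + 1) s
      - normCoeff (k + 1) s * normCoeff (k + 2 - s) (i + 1 - s)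
      + normCoeff (k + 1) (i + 1 - s) * normCoeff (k + 1 - i + s) s = 0 := by
  obtain ⟨t, rfl⟩ : ∃ t, s = t + 1 := ⟨s - 1, by omega⟩
  obtain ⟨a, rfl⟩ : ∃ a, i = 2*t+a+2 := ⟨i - 2*t - 2, by omega⟩
  obtain ⟨b, rfl⟩ : ∃ b, k = 4*t+2*a+b+4 := ⟨k - 4*t - 2*a - 4, by omega⟩
  have e1 : 4*t+2*a+b+4+2-(t+1) = 3*t+2*a+b+4+1 := by omega
  have e2 : 2*t+a+2+1-(t+1) = t+a+2 := by omega
  have e3 : 4*t+2*a+b+4+1-(2*t+a+2)+(t+1) = 3*t+a+b+3+1 := by omega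
  rw [e1, e2, e3]
  rw [normCoeff_closed (4*t+2*a+b+4) (2*t+a+2) (by omega) (by omega),
      normCoeff_closed (2*t+a+2) (t+1) (by omega) (by omega),
      normCoeff_closed (4*t+2*a+b+4) (t+1) (by omega) (by omega),
      normCoeff_closed (3*t+2*a+b+4) (t+a+2) (by omega) (by omega),
      normCoeff_closed (4*t+2*a+b+4) (t+a+2) (by omega) (by omega),
      normCoeff_closed (3*t+a+b+3) (t+1) (by omega) (by omega)]
  simp only [Nat.add_sub_cancel]
  exact_mod_cast key t a b
end

section
/- For all integers k, i, s satisfying 1 ≤ s, 2s < i + 1, 2i > k + 1, and s > 2i − k, the normality coefficients satisfy the identity C^{i+1−s}_{k+1}·C^s_{k+1−i+s} − C^s_{k+1}·C^{i+1−s}_{k+2−s} − C^{k+1−i}_{k+1}·C^s_{i+1} = 0. -/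
open Nat in
lemma normCoeff_mul (n j : ℕ) (h : 2 * j < n) :
    normCoeff n j * ((j ! : ℤ) * ((n - j)! : ℤ)) = ((n : ℤ) - 2 * j) * ((n - 1)! : ℤ) := by
  induction n generalizing j with
  | zero => omega
  | succ k ih =>
    rcases j with _ | m
    · simp [normCoeff, Nat.factorial_succ]
    · rw [normCoeff]
      rw [if_neg (by omega)]
      rcases lt_trichotomy (2 * (m + 1)) k with hlt | heq | hgt
      · rw [if_pos hlt]
        obtain ⟨p, hp, rfl⟩ : ∃ p, m < p ∧ k = m + p + 2 := ⟨k - m - 2, by omega, by omega⟩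
        have I1 := ih m (by omega)
        have I2 := ih (m + 1) (by omega)
        rw [show m + p + 2 - m = p + 2 from by omega, show m + p + 2 - 1 = m + p + 1 from by omega] at I1
        rw [show m + p + 2 - (m + 1) = p + 1 from by omega, show m + p + 2 - 1 = m + p + 1 from by omega] at I2
        rw [show m + p + 2 + 1 - (m + 1) = p + 2 from by omega, show m + p + 2 + 1 - 1 = m + p + 2 from by omega]
        simp only [show m + 1 - 1 = m from by omega]
        push_cast [Nat.factorial_succ] at I1 I2 ⊢
        linear_combination ((m : ℤ) + 1) * I1 + ((p : ℤ) + 2) * I2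
      · rw [if_neg (by omega), if_pos heq]
        obtain rfl : k = 2 * m + 2 := by omega
        have I1 := ih m (by omega)
        rw [show 2 * m + 2 - m = m + 2 from by omega, show 2 * m + 2 - 1 = 2 * m + 1 from by omega] at I1
        rw [show 2 * m + 2 + 1 - (m + 1) = m + 2 from by omega, show 2 * m + 2 + 1 - 1 = 2 * m + 2 from by omega]
        simp only [show m + 1 - 1 = m from by omega]
        push_cast [Nat.factorial_succ] at I1 ⊢
        linear_combination ((m : ℤ) + 1) * I1
      · omega

open Nat in
lemma normCoeff_eq_div (n j : ℕ) (h : 2 * j < n) :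
    (normCoeff n j : ℚ) = (((n : ℚ) - 2 * j) * ((n - 1)! : ℚ)) / ((j ! : ℚ) * ((n - j)! : ℚ)) := by
  rw [eq_div_iff (by positivity)]
  exact_mod_cast normCoeff_mul n j h

/-- identity (6.28): for `1 ≤ s`, `2s < i + 1`, `2i > k + 1`, `s > 2i - k`,
`C^{i+1-s}_{k+1} C^s_{k+1-i+s} - C^s_{k+1} C^{i+1-s}_{k+2-s} - C^{k+1-i}_{k+1} C^s_{i+1} = 0`. -/
theorem stmt15 (k i s : ℕ) (hs : 1 ≤ s) (hsi : 2 * s < i + 1) (hik : 2 * i > k + 1)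
    (hk : 2 * i - k < s) :
    normCoeff (k + 1) (i + 1 - s) * normCoeff (k + 1 - i + s) s
      - normCoeff (k + 1) s * normCoeff (k + 2 - s) (i + 1 - s)
      - normCoeff (k + 1) (k + 1 - i) * normCoeff (i + 1) s = 0 := by
  obtain ⟨p, q, r, rfl, rfl, rfl⟩ :
      ∃ p q r, s = q + r + 3 ∧ i = p + 2 * q + 2 * r + 6 ∧ k = 2 * p + 4 * q + 3 * r + 10 :=
    ⟨i - 2 * s, k + s - 2 * i - 1, 2 * i - k - 2, by omega, by omega, by omega⟩
  rw [show p + 2 * q + 2 * r + 6 + 1 - (q + r + 3) = p + q + r + 4 from by omega,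
    show 2 * p + 4 * q + 3 * r + 10 + 1 - (p + 2 * q + 2 * r + 6) + (q + r + 3) = p + 3 * q + 2 * r + 8 from by omega,
    show 2 * p + 4 * q + 3 * r + 10 + 2 - (q + r + 3) = 2 * p + 3 * q + 2 * r + 9 from by omega,
    show 2 * p + 4 * q + 3 * r + 10 + 1 - (p + 2 * q + 2 * r + 6) = p + 2 * q + r + 5 from by omega,
    show 2 * p + 4 * q + 3 * r + 10 + 1 = 2 * p + 4 * q + 3 * r + 11 from by omega,
    show p + 2 * q + 2 * r + 6 + 1 = p + 2 * q + 2 * r + 7 from by omega]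
  qify
  rw [normCoeff_eq_div (2 * p + 4 * q + 3 * r + 11) (p + q + r + 4) (by omega),
    normCoeff_eq_div (p + 3 * q + 2 * r + 8) (q + r + 3) (by omega),
    normCoeff_eq_div (2 * p + 4 * q + 3 * r + 11) (q + r + 3) (by omega),
    normCoeff_eq_div (2 * p + 3 * q + 2 * r + 9) (p + q + r + 4) (by omega),
    normCoeff_eq_div (2 * p + 4 * q + 3 * r + 11) (p + 2 * q + r + 5) (by omega),
    normCoeff_eq_div (p + 2 * q + 2 * r + 7) (q + r + 3) (by omega)]
  rw [show 2 * p + 4 * q + 3 * r + 11 - 1 = 2 * p + 4 * q + 3 * r + 10 from by omega,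
    show 2 * p + 4 * q + 3 * r + 11 - (p + q + r + 4) = p + 3 * q + 2 * r + 7 from by omega,
    show p + 3 * q + 2 * r + 8 - 1 = p + 3 * q + 2 * r + 7 from by omega,
    show p + 3 * q + 2 * r + 8 - (q + r + 3) = p + 2 * q + r + 5 from by omega,
    show 2 * p + 4 * q + 3 * r + 11 - (q + r + 3) = 2 * p + 3 * q + 2 * r + 8 from by omega,
    show 2 * p + 3 * q + 2 * r + 9 - 1 = 2 * p + 3 * q + 2 * r + 8 from by omega,
    show 2 * p + 3 * q + 2 * r + 9 - (p + q + r + 4) = p + 2 * q + r + 5 from by omega,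
    show 2 * p + 4 * q + 3 * r + 11 - (p + 2 * q + r + 5) = p + 2 * q + 2 * r + 6 from by omega,
    show p + 2 * q + 2 * r + 7 - 1 = p + 2 * q + 2 * r + 6 from by omega,
    show p + 2 * q + 2 * r + 7 - (q + r + 3) = p + q + r + 4 from by omega]
  have h1 : ((Nat.factorial (q + r + 3)) : ℚ) ≠ 0 := by positivity
  have h2 : ((Nat.factorial (p + q + r + 4)) : ℚ) ≠ 0 := by positivity
  have h3 : ((Nat.factorial (p + 2 * q + r + 5)) : ℚ) ≠ 0 := by positivity
  have h4 : ((Nat.factorial (p + 2 * q + 2 * r + 6)) : ℚ) ≠ 0 := by positivity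
  have h5 : ((Nat.factorial (p + 3 * q + 2 * r + 7)) : ℚ) ≠ 0 := by positivity
  have h6 : ((Nat.factorial (2 * p + 3 * q + 2 * r + 8)) : ℚ) ≠ 0 := by positivity
  have h7 : ((Nat.factorial (2 * p + 4 * q + 3 * r + 10)) : ℚ) ≠ 0 := by positivity
  push_cast
  field_simp
  ring
end

section
/- On ℝ³ with coordinates v¹, v², v³, define L_1 = e^{v¹}, L_2 = v² e^{v¹}, L_3 = v³ e^{v¹}. At each point let g be the 3×3 Jacobian matrix with entries g_{ij} = ∂L_i/∂v^j (which is invertible, with det g = e^{3v¹}), let g^{ij} be the entries of g⁻¹, let L^i = Σ_{s=1}^3 L_s g^{si}, let Ω = Σ_{i=1}^3 L_i L^i (which equals e^{v¹} and is nonzero), let P^i_j = δ^i_j − L^i L_j/Ω, and let A^{rs} = Σ_{q=1}^3 g^{qr} ∂L^s/∂v^q. Then at every point of ℝ³ and for all indices i, j the normality equations hold: Σ_{r=1}^3 Σ_{s=1}^3 (A^{rs} − A^{sr}) P^i_r P^j_s = 0. -/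
set_option maxHeartbeats 1000000

private lemma dproj (k : Fin 3) (v : Fin 3 → ℝ) :
    HasFDerivAt (fun w : Fin 3 → ℝ => w k)
      (ContinuousLinearMap.proj k : (Fin 3 → ℝ) →L[ℝ] ℝ) v :=
  hasFDerivAt_apply (𝕜 := ℝ) k v

private lemma dexp0 (v : Fin 3 → ℝ) :
    HasFDerivAt (fun w : Fin 3 → ℝ => Real.exp (w 0))
      (Real.exp (v 0) • (ContinuousLinearMap.proj 0 : (Fin 3 → ℝ) →L[ℝ] ℝ)) v :=
  by have := (Real.hasDerivAt_exp (v 0)).comp_hasFDerivAt v (dproj 0 v); exact this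

private lemma fd_exp0 (v : Fin 3 → ℝ) (j : Fin 3) :
    fderiv ℝ (fun w : Fin 3 → ℝ => Real.exp (w 0)) v (Pi.single j 1)
      = Real.exp (v 0) * (Pi.single j 1 : Fin 3 → ℝ) 0 := by
  rw [(dexp0 v).fderiv]; simp

private lemma fd_mulexp (k : Fin 3) (v : Fin 3 → ℝ) (j : Fin 3) :
    fderiv ℝ (fun w : Fin 3 → ℝ => w k * Real.exp (w 0)) v (Pi.single j 1)
      = v k * (Real.exp (v 0) * (Pi.single j 1 : Fin 3 → ℝ) 0)
        + Real.exp (v 0) * (Pi.single j 1 : Fin 3 → ℝ) k := by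
  rw [(show HasFDerivAt (fun w : Fin 3 → ℝ => w k * Real.exp (w 0)) _ v from
    (dproj k v).mul (dexp0 v)).fderiv]; simp

private lemma fd_lup0 (v : Fin 3 → ℝ) (j : Fin 3) :
    fderiv ℝ (fun w : Fin 3 → ℝ => 1 - w 1 * w 1 - w 2 * w 2) v (Pi.single j 1)
      = -(2 * v 1 * (Pi.single j 1 : Fin 3 → ℝ) 1)
        - 2 * v 2 * (Pi.single j 1 : Fin 3 → ℝ) 2 := by
  have h : HasFDerivAt (fun w : Fin 3 → ℝ => 1 - w 1 * w 1 - w 2 * w 2)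
      (((0 : (Fin 3 → ℝ) →L[ℝ] ℝ) - (v 1 • (ContinuousLinearMap.proj 1 : (Fin 3 → ℝ) →L[ℝ] ℝ)
        + v 1 • ContinuousLinearMap.proj 1))
        - (v 2 • (ContinuousLinearMap.proj 2 : (Fin 3 → ℝ) →L[ℝ] ℝ)
        + v 2 • ContinuousLinearMap.proj 2)) v :=
    ((hasFDerivAt_const (1:ℝ) v).sub ((dproj 1 v).mul (dproj 1 v))).sub
      ((dproj 2 v).mul (dproj 2 v))
  rw [h.fderiv]; simp; ring

private lemma fd_projk (k : Fin 3) (v : Fin 3 → ℝ) (j : Fin 3) :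
    fderiv ℝ (fun w : Fin 3 → ℝ => w k) v (Pi.single j 1)
      = (Pi.single j 1 : Fin 3 → ℝ) k := by
  rw [(dproj k v).fderiv]; simp

/-- on `ℝ³`, the generalized Legendre transformation given by
`L_1 = e^{v¹}`, `L_2 = v² e^{v¹}`, `L_3 = v³ e^{v¹}` has invertible Jacobian `g`
with `det g = e^{3v¹}`, scalar `Ω = Σ L_i L^i = e^{v¹} ≠ 0`, and it satisfies the
normality equations `Σ_{r,s} (A^{rs} - A^{sr}) P^i_r P^j_s = 0` everywhere. -/
theorem stmt19
    (L : (Fin 3 → ℝ) → Fin 3 → ℝ)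
    (hLdef : ∀ v, L v = ![Real.exp (v 0), v 1 * Real.exp (v 0), v 2 * Real.exp (v 0)])
    (g : (Fin 3 → ℝ) → Matrix (Fin 3) (Fin 3) ℝ)
    (hg : ∀ v i j, g v i j = fderiv ℝ (fun w => L w i) v (Pi.single j 1))
    (Lup : (Fin 3 → ℝ) → Fin 3 → ℝ)
    (hLup : ∀ v i, Lup v i = ∑ s, L v s * (g v)⁻¹ s i)
    (Ω : (Fin 3 → ℝ) → ℝ) (hΩ : ∀ v, Ω v = ∑ i, L v i * Lup v i)
    (P : (Fin 3 → ℝ) → Matrix (Fin 3) (Fin 3) ℝ)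
    (hP : ∀ v i j, P v i j = (if i = j then (1:ℝ) else 0) - Lup v i * L v j / Ω v)
    (A : (Fin 3 → ℝ) → Matrix (Fin 3) (Fin 3) ℝ)
    (hA : ∀ v r s,
      A v r s = ∑ q, (g v)⁻¹ q r * fderiv ℝ (fun w => Lup w s) v (Pi.single q 1)) :
    ∀ v : Fin 3 → ℝ,
      IsUnit (g v).det ∧ (g v).det = Real.exp (3 * v 0) ∧
      Ω v = Real.exp (v 0) ∧ Ω v ≠ 0 ∧
      ∀ i j, ∑ r, ∑ s, (A v r s - A v s r) * P v i r * P v j s = 0 := by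
  have hL0 : ∀ w : Fin 3 → ℝ, L w 0 = Real.exp (w 0) := fun w => by rw [hLdef]; simp
  have hL1 : ∀ w : Fin 3 → ℝ, L w 1 = w 1 * Real.exp (w 0) := fun w => by rw [hLdef]; simp
  have hL2 : ∀ w : Fin 3 → ℝ, L w 2 = w 2 * Real.exp (w 0) := fun w => by rw [hLdef]; simp
  have hgv : ∀ v : Fin 3 → ℝ, g v = Matrix.of
      ![![Real.exp (v 0), 0, 0],
        ![v 1 * Real.exp (v 0), Real.exp (v 0), 0],
        ![v 2 * Real.exp (v 0), 0, Real.exp (v 0)]] := by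
    intro v; ext i j
    fin_cases i
    · rw [hg]; simp only [Fin.zero_eta, Fin.mk_one, Fin.reduceFinMk, hL0, fd_exp0]
      fin_cases j <;> simp [Pi.single_apply]
    · rw [hg]; simp only [Fin.zero_eta, Fin.mk_one, Fin.reduceFinMk, hL1, fd_mulexp]
      fin_cases j <;> simp [Pi.single_apply]
    · rw [hg]; simp only [Fin.zero_eta, Fin.mk_one, Fin.reduceFinMk, hL2, fd_mulexp]
      fin_cases j <;> simp [Pi.single_apply]
  have hdet : ∀ v : Fin 3 → ℝ, (g v).det = Real.exp (3 * v 0) := by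
    intro v
    rw [hgv, show (3:ℝ) * v 0 = v 0 + v 0 + v 0 by ring, Real.exp_add, Real.exp_add]
    simp [Matrix.det_fin_three]
  have hginv : ∀ v : Fin 3 → ℝ, (g v)⁻¹ = Matrix.of
      ![![(Real.exp (v 0))⁻¹, 0, 0],
        ![-(v 1) * (Real.exp (v 0))⁻¹, (Real.exp (v 0))⁻¹, 0],
        ![-(v 2) * (Real.exp (v 0))⁻¹, 0, (Real.exp (v 0))⁻¹]] := by
    intro v
    apply Matrix.inv_eq_right_inv
    ext i j
    fin_cases i <;> fin_cases j <;>
      (simp [hgv, Matrix.mul_apply, Fin.sum_univ_three, Matrix.one_apply,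
        Real.exp_ne_zero] <;> field_simp [Real.exp_ne_zero]) <;> ring
  have hLup0 : ∀ w : Fin 3 → ℝ, Lup w 0 = 1 - w 1 * w 1 - w 2 * w 2 := by
    intro w
    rw [hLup, Fin.sum_univ_three, hginv, hL0, hL1, hL2]
    simp
    field_simp
    ring
  have hLup1 : ∀ w : Fin 3 → ℝ, Lup w 1 = w 1 := by
    intro w
    rw [hLup, Fin.sum_univ_three, hginv, hL0, hL1, hL2]
    simp [Real.exp_ne_zero]
  have hLup2 : ∀ w : Fin 3 → ℝ, Lup w 2 = w 2 := by
    intro w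
    rw [hLup, Fin.sum_univ_three, hginv, hL0, hL1, hL2]
    simp [Real.exp_ne_zero]
  have hΩv : ∀ v : Fin 3 → ℝ, Ω v = Real.exp (v 0) := by
    intro v
    rw [hΩ, Fin.sum_univ_three, hL0, hL1, hL2, hLup0, hLup1, hLup2]
    ring
  intro v
  refine ⟨?_, hdet v, hΩv v, ?_, ?_⟩
  · rw [hdet]; exact isUnit_iff_ne_zero.mpr (Real.exp_ne_zero _)
  · rw [hΩv]; exact Real.exp_ne_zero _
  have hAv0 : ∀ r : Fin 3, A v r 0 =
      ![2 * (v 1 * v 1 + v 2 * v 2) * (Real.exp (v 0))⁻¹,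
        -2 * v 1 * (Real.exp (v 0))⁻¹, -2 * v 2 * (Real.exp (v 0))⁻¹] r := by
    intro r
    rw [hA, Fin.sum_univ_three, hginv]
    simp only [hLup0, fd_lup0]
    fin_cases r <;> simp [Pi.single_apply] <;> ring
  have hAv1 : ∀ r : Fin 3, A v r 1 =
      ![-(v 1) * (Real.exp (v 0))⁻¹, (Real.exp (v 0))⁻¹, 0] r := by
    intro r
    rw [hA, Fin.sum_univ_three, hginv]
    simp only [hLup1, fd_projk]
    fin_cases r <;> simp [Pi.single_apply]
  have hAv2 : ∀ r : Fin 3, A v r 2 =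
      ![-(v 2) * (Real.exp (v 0))⁻¹, 0, (Real.exp (v 0))⁻¹] r := by
    intro r
    rw [hA, Fin.sum_univ_three, hginv]
    simp only [hLup2, fd_projk]
    fin_cases r <;> simp [Pi.single_apply]
  have hPv : ∀ i j : Fin 3, P v i j =
      (if i = j then (1:ℝ) else 0) -
        ![1 - v 1 * v 1 - v 2 * v 2, v 1, v 2] i * ![(1:ℝ), v 1, v 2] j := by
    intro i j
    rw [hP, hΩv]
    fin_cases i <;> fin_cases j <;>
      (simp [hL0, hL1, hL2, hLup0, hLup1, hLup2] <;> field_simp [Real.exp_ne_zero]) <;> ring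
  intro i j
  fin_cases i <;> fin_cases j <;>
  · simp only [Fin.sum_univ_three, hPv, hAv0, hAv1, hAv2, Fin.zero_eta, Fin.mk_one,
      Fin.reduceFinMk, Matrix.cons_val_zero, Matrix.cons_val_one, Matrix.cons_val_two,
      Matrix.head_cons, Matrix.tail_cons, Fin.reduceEq, reduceIte, Fin.isValue,
      one_ne_zero, if_true, if_false]
    field_simp
    ring
end
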